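/- arXiv:math/0509291 — 10 statements merged into one kernel-verified Lean document; each statement's English description precedes it below -/
import Mathlib

section
/- Let $G = N \rtimes Q$ be a semidirect product where $N$ is normal in $G$, and let $H$ be a subgroup of $N$ that is normal in $N$. Then for any $x, y \in G$ and $n \in N$, the right-coset counting map $R(g) = |H\backslash HgH|$ satisfies $R(xny) = R(xy)$ (assuming these double cosets contain finitely many right cosets). -/
open scoped Classical Pointwise

variable {G : Type*} [Group G]

/-- The double coset `HaH`. -/
def dcos (H : Subgroup G) (a : G) : Set G := DoubleCoset.doubleCoset a (H : Set G) (H : Set G)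

/-- The set of left cosets of `H` contained in `HaH`, as a subset of `G ⧸ H`. -/
def leftCosetsIn (H : Subgroup G) (a : G) : Set (G ⧸ H) := QuotientGroup.mk '' dcos H a

/-- The set of right cosets of `H` contained in `HaH`. -/
def rightCosetsIn (H : Subgroup G) (a : G) :
    Set (Quotient (QuotientGroup.rightRel H)) :=
  (fun g => Quotient.mk (QuotientGroup.rightRel H) g) '' dcos H a

/-- The right-coset counting map `R(a) = |H\HaH|`. -/
noncomputable def Rcount (H : Subgroup G) (a : G) : ℕ := Nat.card (rightCosetsIn H a)

/-- `(G,H)` is a (discrete) Hecke pair: every double coset contains finitely many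
left cosets. -/
def IsHeckePair (H : Subgroup G) : Prop := ∀ a : G, (leftCosetsIn H a).Finite

/-!
If `m` normalizes `H`, then `Hg ↦ Hmg` is a well-defined bijection of `H\G` which carries
`H\HaH` onto `H\HmaH`, because `m(HaH) = (mHm⁻¹)maH = HmaH`. Hence `R(ma) = R(a)`. For
`n ∈ N` we have `xny = (xnx⁻¹)xy` with `xnx⁻¹ ∈ N`, and `N` normalizes `H`.
-/

namespace Subgroup

variable {H : Subgroup G} {m : G}

theorem le_normalizer_of_forall_conj_mem {N : Subgroup G}
    (hconj : ∀ n ∈ N, ∀ h ∈ H, n * h * n⁻¹ ∈ H) : N ≤ normalizer (H : Set G) := by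
  intro n hn
  refine mem_normalizer_iff.mpr fun h => ⟨hconj n hn h, fun hh => ?_⟩
  simpa [mul_assoc] using hconj n⁻¹ (N.inv_mem hn) _ hh

def rightCosetMulLeft (hm : m ∈ normalizer H) :
    Quotient (QuotientGroup.rightRel H) ≃ Quotient (QuotientGroup.rightRel H) :=
  Quotient.congr (Equiv.mulLeft m) fun a b => by
    rw [QuotientGroup.rightRel_apply, QuotientGroup.rightRel_apply, mem_normalizer_iff.mp hm]
    simp only [Equiv.coe_mulLeft, mul_inv_rev, mul_assoc]

theorem dcos_mul_left (hm : m ∈ normalizer H) (a : G) :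
    dcos H (m * a) = (m * ·) '' dcos H a := by
  ext g
  simp only [dcos, Set.mem_image, DoubleCoset.mem_doubleCoset, SetLike.mem_coe]
  constructor
  · rintro ⟨h, hh, k, hk, rfl⟩
    refine ⟨m⁻¹ * h * m * a * k, ⟨m⁻¹ * h * m, ?_, k, hk, rfl⟩, by group⟩
    simpa using (mem_normalizer_iff''.mp hm h).mp hh
  · rintro ⟨_, ⟨h, hh, k, hk, rfl⟩, rfl⟩
    exact ⟨m * h * m⁻¹, (mem_normalizer_iff.mp hm h).mp hh, k, hk, by group⟩

theorem rightCosetsIn_mul_left (hm : m ∈ normalizer H) (a : G) :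
    rightCosetsIn H (m * a) = rightCosetMulLeft hm '' rightCosetsIn H a := by
  rw [rightCosetsIn, rightCosetsIn, dcos_mul_left hm, Set.image_image, Set.image_image]
  rfl

theorem Rcount_mul_left (hm : m ∈ normalizer H) (a : G) : Rcount H (m * a) = Rcount H a := by
  rw [Rcount, Rcount, rightCosetsIn_mul_left hm,
    Nat.card_image_of_injective (rightCosetMulLeft hm).injective]

end Subgroup

theorem stmt2_general (N H : Subgroup G) (hNnormal : N.Normal)
    (hHnormN : ∀ n ∈ N, ∀ h ∈ H, n * h * n⁻¹ ∈ H)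
    (x y n : G) (hn : n ∈ N) :
    Rcount H (x * n * y) = Rcount H (x * y) := by
  have hm : x * n * x⁻¹ ∈ Subgroup.normalizer (H : Set G) :=
    Subgroup.le_normalizer_of_forall_conj_mem hHnormN (hNnormal.conj_mem n hn x)
  rw [show x * n * y = x * n * x⁻¹ * (x * y) by group, Subgroup.Rcount_mul_left hm]

/-- In a semidirect product `G = N ⋊ Q` with `N ⊴ G`, if `H ≤ N` is normal in `N`,
then the right-coset counting map satisfies `R(xny) = R(xy)` for `n ∈ N` (assuming
the double cosets in question contain finitely many right cosets). -/
theorem stmt2 (N Q H : Subgroup G) (hNnormal : N.Normal)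
    (hsd1 : N ⊓ Q = ⊥) (hsd2 : N ⊔ Q = ⊤)
    (hHN : H ≤ N) (hHnormN : ∀ n ∈ N, ∀ h ∈ H, n * h * n⁻¹ ∈ H)
    (x y n : G) (hn : n ∈ N)
    (hfin1 : (rightCosetsIn H (x * n * y)).Finite)
    (hfin2 : (rightCosetsIn H (x * y)).Finite) :
    Rcount H (x * n * y) = Rcount H (x * y) :=
  stmt2_general N H hNnormal hHnormN x y n hn
end

section
/- Let $(G,H)$ be a discrete Hecke pair and $a, b \in G$ with $HaHbH = HabH$. Then in the Hecke algebra, $[HaH] \cdot [HbH] = \frac{R(a)R(b)}{R(ab)} [HabH]$, where $R(g) = |H\backslash HgH|$. -/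
open scoped Classical Pointwise

variable {G : Type*} [Group G]

/-!
Write `A = HaH`, `B = HbH`, `C = HabH`. The value at `x` of `[HaH] * [HbH]` counts the left cosets
`cH ⊆ A` with `c⁻¹x ∈ B`; `cH ↦ Hc⁻¹x` identifies them with the right cosets `Hd ⊆ B` with
`xd⁻¹ ∈ A`. This count `N(x)` vanishes off `AB = C` and is invariant under `x ↦ hxk`, hence
constant on `C`. Counting the pairs `(Hy, Hd) ∈ H\C × H\B` with `yd⁻¹ ∈ A` by their first entry
gives `R(ab) N(x)`; counting by the second gives `R(b) R(a)`, since `Hy ↦ Hyd⁻¹` maps the right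
cosets inside `Ad ⊆ AB = C` bijectively onto `H\A`.
-/

open QuotientGroup

theorem finsum_ite_one_eq_ncard {α M : Type*} [AddCommMonoidWithOne M] (p : α → Prop)
    [DecidablePred p] (hp : {x | p x}.Finite) : ∑ᶠ x, (if p x then (1 : M) else 0) = {x | p x}.ncard := by
  rw [← finsum_one, Nat.cast_finsum_mem hp, finsum_mem_def]
  simp [Set.indicator_apply]

section HeckePair

variable {H : Subgroup G}

theorem mul_mem_dcos_left {h g a : G} (hh : h ∈ H) (hg : g ∈ dcos H a) : h * g ∈ dcos H a := by
  obtain ⟨p, hp, q, hq, rfl⟩ := DoubleCoset.mem_doubleCoset.1 hg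
  exact DoubleCoset.mem_doubleCoset.2 ⟨h * p, H.mul_mem hh hp, q, hq, by group⟩

theorem mul_mem_dcos_right {h g a : G} (hh : h ∈ H) (hg : g ∈ dcos H a) : g * h ∈ dcos H a := by
  obtain ⟨p, hp, q, hq, rfl⟩ := DoubleCoset.mem_doubleCoset.1 hg
  exact DoubleCoset.mem_doubleCoset.2 ⟨p, hp, q * h, H.mul_mem hq hh, by group⟩

theorem mul_mem_dcos_iff_left {h g a : G} (hh : h ∈ H) : h * g ∈ dcos H a ↔ g ∈ dcos H a :=
  ⟨fun hg => by simpa using mul_mem_dcos_left (H.inv_mem hh) hg, mul_mem_dcos_left hh⟩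

theorem mul_mem_dcos_iff_right {h g a : G} (hh : h ∈ H) : g * h ∈ dcos H a ↔ g ∈ dcos H a :=
  ⟨fun hg => by simpa using mul_mem_dcos_right (H.inv_mem hh) hg, mul_mem_dcos_right hh⟩

theorem dcos_eq_of_mem {g a : G} (hg : g ∈ dcos H a) : dcos H g = dcos H a :=
  DoubleCoset.doubleCoset_eq_of_mem hg

theorem inv_mem_dcos {g a : G} (hg : g ∈ dcos H a) : g⁻¹ ∈ dcos H a⁻¹ := by
  obtain ⟨p, hp, q, hq, rfl⟩ := DoubleCoset.mem_doubleCoset.1 hg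
  exact DoubleCoset.mem_doubleCoset.2 ⟨q⁻¹, H.inv_mem hq, p⁻¹, H.inv_mem hp, by group⟩

theorem exists_out_mk_rightRel_eq (g : G) :
    ∃ h ∈ H, (Quotient.mk (rightRel H) g).out = h * g := by
  have hg : g * (Quotient.mk (rightRel H) g).out⁻¹ ∈ H :=
    rightRel_apply.1 (Quotient.mk_out (s := rightRel H) g)
  exact ⟨_, H.inv_mem hg, by group⟩

theorem out_mk_rightRel_mem_dcos_iff (g a : G) :
    (Quotient.mk (rightRel H) g).out ∈ dcos H a ↔ g ∈ dcos H a := by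
  obtain ⟨h, hh, he⟩ := exists_out_mk_rightRel_eq (H := H) g
  rw [he, mul_mem_dcos_iff_left hh]

theorem mul_inv_out_mk_rightRel_mem_dcos_iff (x g a : G) :
    x * (Quotient.mk (rightRel H) g).out⁻¹ ∈ dcos H a ↔ x * g⁻¹ ∈ dcos H a := by
  obtain ⟨h, hh, he⟩ := exists_out_mk_rightRel_eq (H := H) g
  rw [he, mul_inv_rev, ← mul_assoc, mul_mem_dcos_iff_right (H.inv_mem hh)]

theorem mk_rightRel_mul_left {k : G} (hk : k ∈ H) (g : G) :
    Quotient.mk (rightRel H) (k * g) = Quotient.mk (rightRel H) g :=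
  Quotient.sound (rightRel_apply.2 (by simpa using H.inv_mem hk))

theorem mem_rightCosetsIn_iff {a : G} (q : Quotient (rightRel H)) :
    q ∈ rightCosetsIn H a ↔ q.out ∈ dcos H a := by
  constructor
  · rintro ⟨y, hy, rfl⟩
    exact (out_mk_rightRel_mem_dcos_iff y a).2 hy
  · exact fun hq => ⟨q.out, hq, Quotient.out_eq q⟩

theorem rightCosetsIn_finite (hH : IsHeckePair H) (a : G) : (rightCosetsIn H a).Finite := by
  refine ((hH a⁻¹).image (quotientRightRelEquivQuotientLeftRel H).symm).subset ?_
  rintro _ ⟨y, hy, rfl⟩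
  refine ⟨QuotientGroup.mk y⁻¹, ⟨y⁻¹, inv_mem_dcos hy, rfl⟩, ?_⟩
  show Quotient.mk _ y⁻¹⁻¹ = _
  rw [inv_inv]

theorem rcount_pos (hH : IsHeckePair H) (a : G) : 0 < Rcount H a := by
  rw [Rcount, Nat.card_coe_set_eq]
  exact (Set.ncard_pos (rightCosetsIn_finite hH a)).2
    ⟨_, a, DoubleCoset.mem_doubleCoset_self H H a, rfl⟩

variable (H) in
def rightCosetMulRight (d : G) : Quotient (rightRel H) ≃ Quotient (rightRel H) :=
  Quotient.congr (Equiv.mulRight d) fun x y => by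
    simp only [rightRel_apply, Equiv.coe_mulRight, mul_inv_rev, mul_assoc, mul_inv_cancel_left]

theorem rightCosetMulRight_apply (d : G) (q : Quotient (rightRel H)) :
    rightCosetMulRight H d q = Quotient.mk (rightRel H) (q.out * d) := by
  conv_lhs => rw [← Quotient.out_eq q]
  rfl

variable (H) in
/-- The value at `x` of the convolution `[HaH] * [HbH]`, counted over the right cosets `Hd ⊆ HbH`
with `x d⁻¹ ∈ HaH` rather than over the left cosets of the convolution formula. -/
noncomputable def convCount (a b x : G) : ℕ :=
  {q ∈ rightCosetsIn H b | x * q.out⁻¹ ∈ dcos H a}.ncard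

theorem convCount_mul_left {h : G} (hh : h ∈ H) (a b x : G) :
    convCount H a b (h * x) = convCount H a b x := by
  simp only [convCount, mul_assoc, mul_mem_dcos_iff_left hh]

theorem convCount_mul_right {k : G} (hk : k ∈ H) (a b x : G) :
    convCount H a b (x * k) = convCount H a b x := by
  refine ((rightCosetMulRight H k).bijOn fun q => ?_).ncard_eq.symm
  rw [rightCosetMulRight_apply, Set.mem_sep_iff, Set.mem_sep_iff, mem_rightCosetsIn_iff,
    mem_rightCosetsIn_iff, out_mk_rightRel_mem_dcos_iff, mul_inv_out_mk_rightRel_mem_dcos_iff,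
    mul_mem_dcos_iff_right hk, show x * k * (q.out * k)⁻¹ = x * q.out⁻¹ by group]

theorem convCount_eq_of_mem {a b x y : G} (hy : y ∈ dcos H x) :
    convCount H a b y = convCount H a b x := by
  obtain ⟨h, hh, k, hk, rfl⟩ := DoubleCoset.mem_doubleCoset.1 hy
  rw [convCount_mul_right hk, convCount_mul_left hh]

theorem ncard_rightCosetsIn_mul_inv_mem {a b d : G}
    (hAB : dcos H a * dcos H b ⊆ dcos H (a * b)) (hd : d ∈ dcos H b) :
    {u ∈ rightCosetsIn H (a * b) | u.out * d⁻¹ ∈ dcos H a}.ncard = Rcount H a := by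
  rw [Rcount, Nat.card_coe_set_eq]
  refine ((rightCosetMulRight H d⁻¹).bijOn fun u => ?_).ncard_eq
  rw [mem_rightCosetsIn_iff, rightCosetMulRight_apply, out_mk_rightRel_mem_dcos_iff,
    Set.mem_sep_iff, mem_rightCosetsIn_iff, and_iff_right_of_imp]
  exact fun hu => by simpa using hAB (Set.mul_mem_mul hu hd)

theorem rcount_mul_convCount (hH : IsHeckePair H) {a b x : G}
    (hAB : dcos H a * dcos H b ⊆ dcos H (a * b)) (hx : x ∈ dcos H (a * b)) :
    Rcount H (a * b) * convCount H a b x = Rcount H b * Rcount H a := by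
  have hC := rightCosetsIn_finite hH (a * b)
  have hB := rightCosetsIn_finite hH b
  rw [Rcount, Rcount, Nat.card_coe_set_eq, Nat.card_coe_set_eq, Set.ncard_eq_toFinset_card _ hC,
    Set.ncard_eq_toFinset_card _ hB]
  refine Finset.card_mul_eq_card_mul (fun u v => u.out * v.out⁻¹ ∈ dcos H a)
    (fun u hu => ?_) (fun v hv => ?_)
  · rw [Set.Finite.mem_toFinset, mem_rightCosetsIn_iff, ← dcos_eq_of_mem hx] at hu
    simp only [← Set.ncard_coe_finset, Finset.coe_bipartiteAbove, Set.Finite.mem_toFinset]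
    rw [← convCount_eq_of_mem hu, convCount]
  · rw [Set.Finite.mem_toFinset, mem_rightCosetsIn_iff] at hv
    simp only [← Set.ncard_coe_finset, Finset.coe_bipartiteBelow, Set.Finite.mem_toFinset]
    exact ncard_rightCosetsIn_mul_inv_mem hAB hv

theorem ncard_leftCosets_eq_convCount (a b x : G) :
    {c : G ⧸ H | c.out ∈ dcos H a ∧ c.out⁻¹ * x ∈ dcos H b}.ncard = convCount H a b x := by
  refine (Set.InvOn.bijOn (f := fun c => Quotient.mk (rightRel H) (c.out⁻¹ * x))
    (f' := fun q => (QuotientGroup.mk (x * q.out⁻¹) : G ⧸ H))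
    ⟨fun c _ => ?_, fun q _ => ?_⟩ (fun c hc => ?_) (fun q hq => ?_)).ncard_eq
  · obtain ⟨h, hh, he⟩ := exists_out_mk_rightRel_eq (H := H) (c.out⁻¹ * x)
    dsimp only
    rw [he, show x * (h * (c.out⁻¹ * x))⁻¹ = c.out * h⁻¹ by group,
      mk_mul_of_mem _ (H.inv_mem hh), out_eq']
  · obtain ⟨⟨k, hk⟩, he⟩ := QuotientGroup.mk_out_eq_mul H (x * q.out⁻¹)
    dsimp only
    rw [he, show (x * q.out⁻¹ * k)⁻¹ * x = k⁻¹ * q.out by group,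
      mk_rightRel_mul_left (H.inv_mem hk), Quotient.out_eq]
  · rw [Set.mem_sep_iff, mem_rightCosetsIn_iff, out_mk_rightRel_mem_dcos_iff,
      mul_inv_out_mk_rightRel_mem_dcos_iff, show x * (c.out⁻¹ * x)⁻¹ = c.out by group]
    exact hc.symm
  · obtain ⟨⟨k, hk⟩, he⟩ := QuotientGroup.mk_out_eq_mul H (x * q.out⁻¹)
    rw [Set.mem_sep_iff, mem_rightCosetsIn_iff] at hq
    refine ⟨?_, ?_⟩ <;> dsimp only <;> rw [he]
    · exact mul_mem_dcos_right hk hq.2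
    · rw [show (x * q.out⁻¹ * k)⁻¹ * x = k⁻¹ * q.out by group]
      exact mul_mem_dcos_left (H.inv_mem hk) hq.1

end HeckePair

/-- If `(G,H)` is a discrete Hecke pair and `HaHbH = HabH`, then in the Hecke algebra
`[HaH]⋅[HbH] = (R(a)R(b)/R(ab))⋅[HabH]`, where `R(g) = |H\HgH|`.  The product is
expressed pointwise by its convolution formula. -/
theorem stmt4 (H : Subgroup G) (hHecke : IsHeckePair H) (a b : G)
    (hab : dcos H a * dcos H b = dcos H (a * b)) :
    ∀ x : G,
      (∑ᶠ c : G ⧸ H,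
          if Quotient.out c ∈ dcos H a ∧ (Quotient.out c)⁻¹ * x ∈ dcos H b then (1 : ℂ) else 0)
        = ((Rcount H a : ℂ) * (Rcount H b : ℂ) / (Rcount H (a * b) : ℂ)) *
            (if x ∈ dcos H (a * b) then 1 else 0) := by
  intro x
  have hAB : dcos H a * dcos H b ⊆ dcos H (a * b) := hab.le
  by_cases hx : x ∈ dcos H (a * b)
  · have hfin : {c : G ⧸ H | c.out ∈ dcos H a ∧ c.out⁻¹ * x ∈ dcos H b}.Finite :=
      (hHecke a).subset fun c hc => ⟨c.out, hc.1, out_eq' c⟩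
    have hR : (Rcount H (a * b) : ℂ) ≠ 0 := Nat.cast_ne_zero.2 (rcount_pos hHecke _).ne'
    have hcount := rcount_mul_convCount hHecke hAB hx
    rw [finsum_ite_one_eq_ncard _ hfin, ncard_leftCosets_eq_convCount, if_pos hx, mul_one,
      eq_div_iff hR]
    exact_mod_cast by linarith
  · rw [if_neg hx, mul_zero]
    refine finsum_eq_zero_of_forall_eq_zero fun c => if_neg fun ⟨hcA, hcB⟩ => hx ?_
    simpa using hAB (Set.mul_mem_mul hcA hcB)
end

section
/- Let $G$ be a group with subgroup $H$, and let $s \in G$ satisfy $s^{-1}Hs \subseteq H$. Then for $x, y \in G$: $xsH = yH$ if and only if $xH \subseteq yHs^{-1}H$. Consequently, for each $y \in G$, the set $\{xH : xsH = yH\}$ has cardinality equal to $|Hs^{-1}H / H|$, the number of left cosets of $H$ contained in $Hs^{-1}H$. -/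
open scoped Classical Pointwise

variable {G : Type*} [Group G]

/-- If `s⁻¹Hs ⊆ H` then for `x, y ∈ G`: `xsH = yH` iff `xH ⊆ yHs⁻¹H`, and consequently
the map `xH ↦ xsH` on `G ⧸ H` has fibers of cardinality `|Hs⁻¹H/H|`. -/
theorem stmt5 (H : Subgroup G) (s : G) (hs : ∀ h ∈ H, s⁻¹ * h * s ∈ H) :
    (∀ x y : G,
        (QuotientGroup.mk (x * s) : G ⧸ H) = QuotientGroup.mk y ↔
          x ∈ (fun g => y * g) '' dcos H s⁻¹) ∧
    (∀ y : G,
        Nat.card ↥{c : G ⧸ H |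
            (QuotientGroup.mk (Quotient.out c * s) : G ⧸ H) = QuotientGroup.mk y}
          = Nat.card (leftCosetsIn H s⁻¹)) := by
  have key : ∀ x y : G,
      (QuotientGroup.mk (x * s) : G ⧸ H) = QuotientGroup.mk y ↔
        x ∈ (fun g => y * g) '' dcos H s⁻¹ := by
    intro x y
    rw [QuotientGroup.eq]
    constructor
    · intro h
      -- h : (x*s)⁻¹ * y ∈ H
      refine ⟨((x * s)⁻¹ * y)⁻¹ * s⁻¹, ?_, ?_⟩
      · exact DoubleCoset.mem_doubleCoset.2 ⟨((x * s)⁻¹ * y)⁻¹, H.inv_mem h, 1, H.one_mem, by group⟩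
      · simp only []
        group
    · rintro ⟨g, hg, rfl⟩
      obtain ⟨h1, h1H, h2, h2H, rfl⟩ := DoubleCoset.mem_doubleCoset.1 hg
      have : (y * (h1 * s⁻¹ * h2) * s)⁻¹ * y = s⁻¹ * h2⁻¹ * s * h1⁻¹ := by group
      rw [this]
      exact H.mul_mem (hs _ (H.inv_mem h2H)) (H.inv_mem h1H)
  refine ⟨key, fun y => ?_⟩
  have hset : {c : G ⧸ H |
      (QuotientGroup.mk (Quotient.out c * s) : G ⧸ H) = QuotientGroup.mk y}
      = (fun d : G ⧸ H => y • d) '' leftCosetsIn H s⁻¹ := by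
    ext c
    simp only [Set.mem_setOf_eq]
    rw [key]
    constructor
    · rintro ⟨g, hg, hout⟩
      exact ⟨QuotientGroup.mk g, ⟨g, hg, rfl⟩, by
        rw [← QuotientGroup.out_eq' c, ← hout]; rfl⟩
    · rintro ⟨d, ⟨g, hg, rfl⟩, hc⟩
      have hc' : (QuotientGroup.mk (y * g) : G ⧸ H) = c := hc
      have : (y * g)⁻¹ * Quotient.out c ∈ H := by
        rw [← QuotientGroup.eq, hc', QuotientGroup.out_eq']
      refine ⟨g * ((y * g)⁻¹ * Quotient.out c), ?_, by group⟩
      obtain ⟨h1, h1H, h2, h2H, rfl⟩ := DoubleCoset.mem_doubleCoset.1 hg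
      exact DoubleCoset.mem_doubleCoset.2 ⟨h1, h1H, h2 * ((y * (h1 * s⁻¹ * h2))⁻¹ * Quotient.out c),
        H.mul_mem h2H this, by group⟩
  rw [hset]
  exact Nat.card_image_of_injective (MulAction.injective y) _
end

section
/- Let $(G,H)$ be a discrete Hecke pair and let $(\nu, V)$ be a matrix unit pair on a Hilbert space $\mathcal{H}$ satisfying condition (i): $V([HaH])\nu(\epsilon_{xH}) = \sum_{uH \subseteq Ha^{-1}H} \nu(\epsilon_{xuH}) V([HaH]) \nu(\epsilon_{xH})$ for all $a,x \in G$. Then $\|V([HaH])|_{\nu(\epsilon_{xH})\mathcal{H}}\| \leq R(a)^{1/2}$ for all $a,x \in G$, where $R(a) = |H\backslash HaH|$; in fact $\|V([HaH])h\|^2 = R(a)\|h\|^2$ for $h \in \nu(\epsilon_{xH})\mathcal{H}$. -/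
/-!
By condition (i), for `ξ ∈ ν(ε_{xH})ℋ` the vector `V([HaH])ξ` is the sum of the vectors
`υ_{xuH,xH} ξ` over the cosets `uH ⊆ Ha⁻¹H`, of which there are `R(a)` (inversion matches them
with `H\HaH`). The matrix unit relations give `υ_{xuH,xH}^* υ_{xu'H,xH} = δ_{uH,u'H} ν(ε_{xH})`,
so these vectors are pairwise orthogonal and all of norm `‖ξ‖`; Pythagoras gives the result.
-/

open scoped Classical Pointwise

variable {G : Type*} [Group G]

variable {E : Type*} [NormedAddCommGroup E] [InnerProductSpace ℂ E] [CompleteSpace E]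

namespace DoubleCoset

variable {H : Subgroup G} {a : G}

theorem inv_mem_dcos_inv {g : G} (hg : g ∈ dcos H a) : g⁻¹ ∈ dcos H a⁻¹ := by
  obtain ⟨h, hh, k, hk, rfl⟩ := mem_doubleCoset.1 hg
  exact mem_doubleCoset.2 ⟨k⁻¹, H.inv_mem hk, h⁻¹, H.inv_mem hh, by group⟩

theorem mul_mem_dcos {g h : G} (hg : g ∈ dcos H a) (hh : h ∈ H) : g * h ∈ dcos H a := by
  obtain ⟨p, hp, q, hq, rfl⟩ := mem_doubleCoset.1 hg
  exact mem_doubleCoset.2 ⟨p, hp, q * h, H.mul_mem hq hh, by group⟩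

theorem out_mem_dcos_iff (d : G ⧸ H) : d.out ∈ dcos H a ↔ d ∈ leftCosetsIn H a := by
  refine ⟨fun hd => ⟨_, hd, d.out_eq'⟩, ?_⟩
  rintro ⟨g, hg, rfl⟩
  obtain ⟨h, hh⟩ := QuotientGroup.mk_out_eq_mul H g
  exact hh ▸ mul_mem_dcos hg h.2

theorem leftCosetsIn_inv_eq_image_rightCosetsIn :
    leftCosetsIn H a⁻¹ =
      QuotientGroup.quotientRightRelEquivQuotientLeftRel H '' rightCosetsIn H a := by
  ext d
  constructor
  · rintro ⟨g, hg, rfl⟩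
    refine ⟨_, ⟨g⁻¹, by simpa using inv_mem_dcos_inv hg, rfl⟩, ?_⟩
    simp [QuotientGroup.quotientRightRelEquivQuotientLeftRel]
  · rintro ⟨_, ⟨g, hg, rfl⟩, rfl⟩
    exact ⟨g⁻¹, inv_mem_dcos_inv hg, rfl⟩

theorem card_setOf_out_mem_dcos_inv :
    Nat.card {d : G ⧸ H | d.out ∈ dcos H a⁻¹} = Rcount H a := by
  have hset : {d : G ⧸ H | d.out ∈ dcos H a⁻¹} = leftCosetsIn H a⁻¹ :=
    Set.ext out_mem_dcos_iff
  rw [hset, leftCosetsIn_inv_eq_image_rightCosetsIn,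
    Nat.card_image_of_injective (Equiv.injective _)]
  rfl

end DoubleCoset

theorem IsHeckePair.finite_setOf_out_mem_dcos {H : Subgroup G} (hH : IsHeckePair H) (a : G) :
    {d : G ⧸ H | d.out ∈ dcos H a}.Finite :=
  (hH a).subset fun d => (DoubleCoset.out_mem_dcos_iff d).1

theorem finsum_ite_eq_sum_toFinset {α M : Type*} [AddCommMonoid M] {p : α → Prop}
    (hp : {a | p a}.Finite) (f : α → M) :
    ∑ᶠ a, (if p a then f a else 0) = ∑ a ∈ hp.toFinset, f a := by
  rw [← finsum_mem_eq_finite_toFinset_sum f hp, finsum_mem_def]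
  rfl

section Orthogonality

variable {𝕜 F ι : Type*} [RCLike 𝕜] [NormedAddCommGroup F] [InnerProductSpace 𝕜 F]
  [DecidableEq ι]

theorem norm_sum_sq_of_inner_eq_ite (s : Finset ι) (v : ι → F) (c : ℝ)
    (hv : ∀ i ∈ s, ∀ j ∈ s, inner 𝕜 (v i) (v j) = if i = j then (c : 𝕜) else 0) :
    ‖∑ i ∈ s, v i‖ ^ 2 = s.card * c := by
  have hinner : inner 𝕜 (∑ i ∈ s, v i) (∑ j ∈ s, v j) = ((s.card * c : ℝ) : 𝕜) := by
    calc inner 𝕜 (∑ i ∈ s, v i) (∑ j ∈ s, v j)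
        = ∑ i ∈ s, ∑ j ∈ s, inner 𝕜 (v i) (v j) := by
          rw [sum_inner]; simp only [inner_sum]
      _ = ∑ _i ∈ s, (c : 𝕜) := Finset.sum_congr rfl fun i hi => by
          rw [Finset.sum_congr rfl (hv i hi), Finset.sum_ite_eq, if_pos hi]
      _ = ((s.card * c : ℝ) : 𝕜) := by simp
  rw [inner_self_eq_norm_sq_to_K] at hinner
  exact_mod_cast hinner

theorem norm_sum_apply_sq_of_star_mul_eq_ite [CompleteSpace F] (s : Finset ι)
    (M : ι → F →L[𝕜] F) (P : F →L[𝕜] F)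
    (hM : ∀ i ∈ s, ∀ j ∈ s, star (M i) * M j = if i = j then P else 0)
    {ξ : F} (hξ : P ξ = ξ) :
    ‖∑ i ∈ s, M i ξ‖ ^ 2 = s.card * ‖ξ‖ ^ 2 := by
  refine norm_sum_sq_of_inner_eq_ite (𝕜 := 𝕜) s _ _ fun i hi j hj => ?_
  rw [← ContinuousLinearMap.adjoint_inner_right, ← ContinuousLinearMap.star_eq_adjoint,
    ← mul_apply_eq_comp, hM i hi j hj]
  split_ifs <;> simp [hξ, inner_self_eq_norm_sq_to_K]

end Orthogonality

section MatrixUnit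

variable {H : Subgroup G} {A : Type*} [Semiring A] (ν : G ⧸ H → A) (V : G → A)

/-- The operator `υ_{xH,yH}`, written in terms of representatives `x` and `y`. -/
def matrixUnit (x y : G) : A := ν x * V (x⁻¹ * y) * ν y

theorem star_matrixUnit_mul_matrixUnit [Star A] (hν_idem : ∀ c, ν c * ν c = ν c)
    (hV_one : V 1 = 1) (hstar : ∀ x y, star (matrixUnit ν V x y) = matrixUnit ν V y x)
    (hmul : ∀ x y w z, matrixUnit ν V x y * matrixUnit ν V w z =
      if (w : G ⧸ H) = y then matrixUnit ν V x z else 0)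
    (x y z : G) :
    star (matrixUnit ν V y x) * matrixUnit ν V z x = if (z : G ⧸ H) = y then ν x else 0 := by
  rw [hstar, hmul]
  simp only [matrixUnit, inv_mul_cancel, hV_one, mul_one, hν_idem]

theorem matrixUnit_eq_of_mem_dcos_inv {a u : G}
    (hV_class : ∀ a b : G, b ∈ dcos H a → V b = V a)
    (hu : u ∈ dcos H a⁻¹) (x : G) :
    matrixUnit ν V (x * u) x = ν ↑(x * u) * V a * ν x := by
  have hinv : (x * u)⁻¹ * x = u⁻¹ := by group
  rw [matrixUnit, hinv, hV_class a _ (by simpa using DoubleCoset.inv_mem_dcos_inv hu)]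

theorem mul_eq_sum_matrixUnit (hH : IsHeckePair H)
    (hV_class : ∀ a b : G, b ∈ dcos H a → V b = V a)
    (hcond : ∀ a x : G, V a * ν x = ∑ᶠ d : G ⧸ H,
      if d.out ∈ dcos H a⁻¹ then ν ↑(x * d.out) * V a * ν x else 0)
    (a x : G) :
    V a * ν x =
      ∑ d ∈ (hH.finite_setOf_out_mem_dcos a⁻¹).toFinset, matrixUnit ν V (x * d.out) x := by
  rw [hcond, finsum_ite_eq_sum_toFinset (hH.finite_setOf_out_mem_dcos a⁻¹)]
  refine Finset.sum_congr rfl fun d hd => ?_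
  rw [Set.Finite.mem_toFinset] at hd
  exact (matrixUnit_eq_of_mem_dcos_inv ν V hV_class hd x).symm

end MatrixUnit

theorem stmt8_general (H : Subgroup G) (hHecke : IsHeckePair H)
    (ν : G ⧸ H → E →L[ℂ] E) (V : G → E →L[ℂ] E)
    (hν_idem : ∀ c, ν c * ν c = ν c)
    (hV_class : ∀ a b : G, b ∈ dcos H a → V b = V a)
    (hV_one : V 1 = 1)
    -- `(ν, V)` is a matrix unit pair:
    (hmu_star : ∀ x y : G,
      star (ν (QuotientGroup.mk x) * V (x⁻¹ * y) * ν (QuotientGroup.mk y)) =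
        ν (QuotientGroup.mk y) * V (y⁻¹ * x) * ν (QuotientGroup.mk x))
    (hmu_mul : ∀ x y w z : G,
      (ν (QuotientGroup.mk x) * V (x⁻¹ * y) * ν (QuotientGroup.mk y)) *
          (ν (QuotientGroup.mk w) * V (w⁻¹ * z) * ν (QuotientGroup.mk z)) =
        if (QuotientGroup.mk w : G ⧸ H) = QuotientGroup.mk y then
          ν (QuotientGroup.mk x) * V (x⁻¹ * z) * ν (QuotientGroup.mk z)
        else 0)
    -- condition (i):
    (hcond : ∀ a x : G,
      V a * ν (QuotientGroup.mk x) =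
        ∑ᶠ d : G ⧸ H,
          if Quotient.out d ∈ dcos H a⁻¹ then
            ν (QuotientGroup.mk (x * Quotient.out d)) * V a * ν (QuotientGroup.mk x)
          else 0) :
    ∀ (a x : G) (ξ : E), ν (QuotientGroup.mk x) ξ = ξ →
      ‖V a ξ‖ ^ 2 = (Rcount H a : ℝ) * ‖ξ‖ ^ 2 ∧
      ‖V a ξ‖ ≤ Real.sqrt (Rcount H a) * ‖ξ‖ := by
  intro a x ξ hξ
  set S := hHecke.finite_setOf_out_mem_dcos a⁻¹
  have hVξ : V a ξ = ∑ d ∈ S.toFinset, matrixUnit ν V (x * d.out) x ξ := by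
    rw [← hξ, ← mul_apply_eq_comp, mul_eq_sum_matrixUnit ν V hHecke hV_class hcond, sum_apply,
      hξ]
  -- Left multiplication by `x` permutes `G ⧸ H`, so distinct `d` give orthogonal matrix units.
  have horth : ∀ d ∈ S.toFinset, ∀ d' ∈ S.toFinset,
      star (matrixUnit ν V (x * d.out) x) * matrixUnit ν V (x * d'.out) x =
        if d = d' then ν x else 0 := by
    intro d _ d' _
    rw [star_matrixUnit_mul_matrixUnit ν V hν_idem hV_one hmu_star hmu_mul]
    simp only [← smul_eq_mul, MulAction.Quotient.mk_smul_out, smul_left_cancel_iff, eq_comm]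
  have hcard : (S.toFinset.card : ℝ) = Rcount H a := by
    rw [← Set.ncard_eq_toFinset_card _ S, ← Nat.card_coe_set_eq,
      DoubleCoset.card_setOf_out_mem_dcos_inv]
  have hnorm : ‖V a ξ‖ ^ 2 = Rcount H a * ‖ξ‖ ^ 2 := by
    rw [hVξ, norm_sum_apply_sq_of_star_mul_eq_ite _ _ _ horth hξ, hcard]
  refine ⟨hnorm, le_of_eq ?_⟩
  rw [← Real.sqrt_sq (norm_nonneg (V a ξ)), hnorm, Real.sqrt_mul (Nat.cast_nonneg _),
    Real.sqrt_sq (norm_nonneg ξ)]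

/-- If `(ν, V)` is a matrix unit pair for the discrete Hecke pair `(G,H)` satisfying
`V([HaH])ν(ε_{xH}) = ∑_{uH ⊆ Ha⁻¹H} ν(ε_{xuH}) V([HaH]) ν(ε_{xH})`, then for every
`ξ` in the range of the projection `ν(ε_{xH})` one has `‖V([HaH])ξ‖² = R(a)‖ξ‖²`;
in particular `‖V([HaH])|_{ν(ε_{xH})ℋ}‖ ≤ R(a)^{1/2}`. -/
theorem stmt8 (H : Subgroup G) (hHecke : IsHeckePair H)
    (ν : G ⧸ H → E →L[ℂ] E) (V : G → E →L[ℂ] E)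
    (hν_sa : ∀ c, IsSelfAdjoint (ν c)) (hν_idem : ∀ c, ν c * ν c = ν c)
    (hν_orth : ∀ c d, c ≠ d → ν c * ν d = 0)
    (hν_nd : (⨆ c : G ⧸ H, LinearMap.range (ν c : E →ₗ[ℂ] E)).topologicalClosure = ⊤)
    (hV_class : ∀ a b : G, b ∈ dcos H a → V b = V a)
    (hV_one : V 1 = 1) (hV_star : ∀ a : G, star (V a) = V a⁻¹)
    (hV_mul : ∀ a b : G, V a * V b =
      ∑ᶠ c : DoubleCoset.Quotient (H : Set G) (H : Set G),
        (Nat.card ↥{d : G ⧸ H | Quotient.out d ∈ dcos H a ∧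
            (Quotient.out d)⁻¹ * Quotient.out c ∈ dcos H b} : ℂ) • V (Quotient.out c))
    -- `(ν, V)` is a matrix unit pair:
    (hmu_star : ∀ x y : G,
      star (ν (QuotientGroup.mk x) * V (x⁻¹ * y) * ν (QuotientGroup.mk y)) =
        ν (QuotientGroup.mk y) * V (y⁻¹ * x) * ν (QuotientGroup.mk x))
    (hmu_mul : ∀ x y w z : G,
      (ν (QuotientGroup.mk x) * V (x⁻¹ * y) * ν (QuotientGroup.mk y)) *
          (ν (QuotientGroup.mk w) * V (w⁻¹ * z) * ν (QuotientGroup.mk z)) =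
        if (QuotientGroup.mk w : G ⧸ H) = QuotientGroup.mk y then
          ν (QuotientGroup.mk x) * V (x⁻¹ * z) * ν (QuotientGroup.mk z)
        else 0)
    -- condition (i):
    (hcond : ∀ a x : G,
      V a * ν (QuotientGroup.mk x) =
        ∑ᶠ d : G ⧸ H,
          if Quotient.out d ∈ dcos H a⁻¹ then
            ν (QuotientGroup.mk (x * Quotient.out d)) * V a * ν (QuotientGroup.mk x)
          else 0) :
    ∀ (a x : G) (ξ : E), ν (QuotientGroup.mk x) ξ = ξ →
      ‖V a ξ‖ ^ 2 = (Rcount H a : ℝ) * ‖ξ‖ ^ 2 ∧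
      ‖V a ξ‖ ≤ Real.sqrt (Rcount H a) * ‖ξ‖ :=
  stmt8_general H hHecke ν V hν_idem hV_class hV_one hmu_star hmu_mul hcond
end

section
/- Let $(G,H)$ be a discrete Hecke pair, and let $M$ and $\rho$ be the representations of $c_0(G/H)$ and $\mathcal{H}(G,H)$ on $\ell^2(G/H)$ given by $M(f)\epsilon_{yH} = f(yH)\epsilon_{yH}$ and $\rho([HaH])\epsilon_{yH} = \sum_{uH \subseteq Ha^{-1}H} \epsilon_{yuH}$. Then for all $x, y \in G$: $M(\epsilon_{xH})\,\rho([Hx^{-1}yH])\,M(\epsilon_{yH}) = \epsilon_{xH} \otimes \overline{\epsilon_{yH}}$, the rank-one operator $\zeta \mapsto \langle \zeta, \epsilon_{yH}\rangle \epsilon_{xH}$. In particular $(M,\rho)$ is a matrix unit pair. -/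
open scoped Classical Pointwise

variable {G : Type*} [Group G]

/-! `M(ε_{xH}) ρ(x⁻¹y) M(ε_{yH})` kills every basis vector except `ε_{yH}`, which `ρ` sends to
the sum of the `ε_{y'uH}` over the finitely many left cosets `uH ⊆ Hy⁻¹xH`, where `y'` is the
chosen representative of `yH`. Exactly one of them, `uH = y'⁻¹xH`, survives the final
projection onto `ε_{xH}`. So the operator agrees with the rank-one operator `ε_{xH} ⊗ ε̄_{yH}` on
the standard basis, hence everywhere, and the adjoint and product relations are those of
rank-one operators. -/

open scoped lp
open InnerProductSpace QuotientGroup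

theorem lp.ext_continuousLinearMap_single_one {ι 𝕜 F : Type*} [NormedField 𝕜]
    [AddCommMonoid F] [Module 𝕜 F] [TopologicalSpace F] [T2Space F] [DecidableEq ι]
    {p : ENNReal} [Fact (1 ≤ p)] (hp : p ≠ ⊤) {f g : lp (fun _ : ι => 𝕜) p →L[𝕜] F}
    (h : ∀ i, f (lp.single p i 1) = g (lp.single p i 1)) : f = g :=
  lp.ext_continuousLinearMap hp fun i => ContinuousLinearMap.ext_ring (h i)

theorem lp.inner_single_one_single_one {ι 𝕜 : Type*} [RCLike 𝕜] [DecidableEq ι] (i j : ι) :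
    inner 𝕜 (lp.single 2 i (1 : 𝕜)) (lp.single 2 j (1 : 𝕜) : ℓ²(ι, 𝕜)) =
      if j = i then 1 else 0 := by
  simp [lp.inner_single_left, lp.single_apply, Pi.single_apply, eq_comm]

section HeckePair

variable {H : Subgroup G}

theorem out_mem_dcos_iff (u : G ⧸ H) (a : G) : u.out ∈ dcos H a ↔ u ∈ leftCosetsIn H a := by
  refine ⟨fun hu => ⟨u.out, hu, out_eq' u⟩, ?_⟩
  rintro ⟨g, hg, rfl⟩
  obtain ⟨h₁, hh₁, h₂, hh₂, rfl⟩ := DoubleCoset.mem_doubleCoset.mp hg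
  set g := h₁ * a * h₂
  obtain ⟨h, hh, hout⟩ : ∃ h ∈ H, (mk g : G ⧸ H).out = g * h :=
    ⟨g⁻¹ * (mk g : G ⧸ H).out, QuotientGroup.eq.mp (out_eq' _).symm, by group⟩
  rw [hout, mul_assoc]
  exact DoubleCoset.mem_doubleCoset.mpr ⟨h₁, hh₁, h₂ * h, H.mul_mem hh₂ hh, rfl⟩

theorem inv_smul_mk_mem_leftCosetsIn {g y : G} (hg : (mk g : G ⧸ H) = mk y) (x : G) :
    g⁻¹ • (mk x : G ⧸ H) ∈ leftCosetsIn H (x⁻¹ * y)⁻¹ := by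
  obtain ⟨h, hh, hgy⟩ : ∃ h ∈ H, g = y * h :=
    ⟨y⁻¹ * g, QuotientGroup.eq.mp hg.symm, by group⟩
  refine ⟨g⁻¹ * x, DoubleCoset.mem_doubleCoset.mpr ⟨h⁻¹, H.inv_mem hh, 1, H.one_mem, ?_⟩, rfl⟩
  rw [hgy]
  group

variable (H) in
structure IsMultiplicationRep (Mop : G ⧸ H → ℓ²(G ⧸ H, ℂ) →L[ℂ] ℓ²(G ⧸ H, ℂ)) : Prop where
  apply_single : ∀ c d : G ⧸ H,
    Mop c (lp.single 2 d 1) = if d = c then lp.single 2 d 1 else 0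

variable (H) in
structure IsRightConvolutionRep (ρop : G → ℓ²(G ⧸ H, ℂ) →L[ℂ] ℓ²(G ⧸ H, ℂ)) : Prop where
  apply_single : ∀ (a : G) (d : G ⧸ H), ρop a (lp.single 2 d 1) =
    ∑ᶠ u : G ⧸ H, if u.out ∈ dcos H a⁻¹ then lp.single 2 (mk (d.out * u.out)) 1 else 0

theorem IsRightConvolutionRep.apply_single_eq_sum {ρop : G → ℓ²(G ⧸ H, ℂ) →L[ℂ] ℓ²(G ⧸ H, ℂ)}
    (hρ : IsRightConvolutionRep H ρop) (hHecke : IsHeckePair H) (a : G) (d : G ⧸ H) :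
    ρop a (lp.single 2 d 1) = ∑ u ∈ (hHecke a⁻¹).toFinset, lp.single 2 (d.out • u) 1 := by
  simp_rw [hρ.apply_single a d, out_mem_dcos_iff, ← smul_eq_mul, MulAction.Quotient.mk_smul_out]
  rw [finsum_eq_sum_of_support_subset _ (s := (hHecke a⁻¹).toFinset)]
  · exact Finset.sum_congr rfl fun u hu => if_pos ((Set.Finite.mem_toFinset _).mp hu)
  · exact Function.support_subset_iff'.mpr fun u hu =>
      if_neg fun h => hu ((Set.Finite.mem_toFinset _).mpr h)

theorem IsMultiplicationRep.apply_sum_single_smul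
    {Mop : G ⧸ H → ℓ²(G ⧸ H, ℂ) →L[ℂ] ℓ²(G ⧸ H, ℂ)} (hM : IsMultiplicationRep H Mop)
    (c : G ⧸ H) (g : G) (s : Finset (G ⧸ H)) :
    Mop c (∑ u ∈ s, lp.single 2 (g • u) 1) = if g⁻¹ • c ∈ s then lp.single 2 c 1 else 0 := by
  rw [map_sum, ← Finset.sum_ite_eq' s (g⁻¹ • c) fun _ => (lp.single 2 c 1 : ℓ²(G ⧸ H, ℂ))]
  refine Finset.sum_congr rfl fun u _ => ?_
  rw [hM.apply_single]
  by_cases hu : g • u = c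
  · rw [if_pos hu, if_pos (eq_inv_smul_iff.mpr hu), hu]
  · rw [if_neg hu, if_neg (mt eq_inv_smul_iff.mp hu)]

theorem mul_rho_mul_apply_single {Mop : G ⧸ H → ℓ²(G ⧸ H, ℂ) →L[ℂ] ℓ²(G ⧸ H, ℂ)}
    {ρop : G → ℓ²(G ⧸ H, ℂ) →L[ℂ] ℓ²(G ⧸ H, ℂ)} (hHecke : IsHeckePair H)
    (hM : IsMultiplicationRep H Mop) (hρ : IsRightConvolutionRep H ρop) (x y : G) (d : G ⧸ H) :
    (Mop (mk x) * ρop (x⁻¹ * y) * Mop (mk y)) (lp.single 2 d 1) =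
      if d = mk y then lp.single 2 (mk x) 1 else 0 := by
  simp only [mul_apply_eq_comp, hM.apply_single _ d]
  split_ifs with hd
  · rw [hd, hρ.apply_single_eq_sum hHecke, hM.apply_sum_single_smul, if_pos]
    exact (Set.Finite.mem_toFinset _).mpr (inv_smul_mk_mem_leftCosetsIn (out_eq' _) x)
  · simp only [map_zero]

theorem mul_rho_mul_eq_rankOne {Mop : G ⧸ H → ℓ²(G ⧸ H, ℂ) →L[ℂ] ℓ²(G ⧸ H, ℂ)}
    {ρop : G → ℓ²(G ⧸ H, ℂ) →L[ℂ] ℓ²(G ⧸ H, ℂ)} (hHecke : IsHeckePair H)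
    (hM : IsMultiplicationRep H Mop) (hρ : IsRightConvolutionRep H ρop) (x y : G) :
    Mop (mk x) * ρop (x⁻¹ * y) * Mop (mk y) =
      rankOne ℂ (lp.single 2 (mk x : G ⧸ H) 1) (lp.single 2 (mk y : G ⧸ H) 1) := by
  refine lp.ext_continuousLinearMap_single_one ENNReal.ofNat_ne_top fun d => ?_
  rw [mul_rho_mul_apply_single hHecke hM hρ, rankOne_apply, lp.inner_single_one_single_one,
    ite_smul, one_smul, zero_smul]

end HeckePair

/-- For the multiplication representation `M` and right-convolution representation `ρ`
of a discrete Hecke pair `(G,H)` on `ℓ²(G/H)` (characterised by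
`M(ε_{cH})ε_{dH} = [d = c] ε_{dH}` and `ρ([HaH])ε_{yH} = ∑_{uH ⊆ Ha⁻¹H} ε_{yuH}`),
one has `M(ε_{xH}) ρ([Hx⁻¹yH]) M(ε_{yH}) = ε_{xH} ⊗ \bar{ε_{yH}}`, the rank-one
operator `ζ ↦ (ζ|ε_{yH}) ε_{xH}`.  In particular `(M, ρ)` is a matrix unit pair. -/
theorem stmt11 (H : Subgroup G) (hHecke : IsHeckePair H)
    (Mop : G ⧸ H → lp (fun _ : G ⧸ H => ℂ) 2 →L[ℂ] lp (fun _ : G ⧸ H => ℂ) 2)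
    (ρop : G → lp (fun _ : G ⧸ H => ℂ) 2 →L[ℂ] lp (fun _ : G ⧸ H => ℂ) 2)
    (hM : ∀ c d : G ⧸ H,
      Mop c (lp.single 2 d 1) = if d = c then lp.single 2 d 1 else 0)
    (hρ : ∀ (a : G) (d : G ⧸ H),
      ρop a (lp.single 2 d 1) =
        ∑ᶠ u : G ⧸ H,
          if Quotient.out u ∈ dcos H a⁻¹ then
            lp.single 2 (QuotientGroup.mk (Quotient.out d * Quotient.out u)) 1
          else 0) :
    (∀ (x y : G) (ζ : lp (fun _ : G ⧸ H => ℂ) 2),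
      (Mop (QuotientGroup.mk x) * ρop (x⁻¹ * y) * Mop (QuotientGroup.mk y)) ζ =
        (inner ℂ (lp.single 2 (QuotientGroup.mk y : G ⧸ H) (1 : ℂ)) ζ : ℂ) •
          lp.single 2 (QuotientGroup.mk x : G ⧸ H) (1 : ℂ)) ∧
    (∀ x y : G,
      star (Mop (QuotientGroup.mk x) * ρop (x⁻¹ * y) * Mop (QuotientGroup.mk y)) =
        Mop (QuotientGroup.mk y) * ρop (y⁻¹ * x) * Mop (QuotientGroup.mk x)) ∧
    (∀ x y w z : G,
      (Mop (QuotientGroup.mk x) * ρop (x⁻¹ * y) * Mop (QuotientGroup.mk y)) *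
          (Mop (QuotientGroup.mk w) * ρop (w⁻¹ * z) * Mop (QuotientGroup.mk z)) =
        if (QuotientGroup.mk w : G ⧸ H) = QuotientGroup.mk y then
          Mop (QuotientGroup.mk x) * ρop (x⁻¹ * z) * Mop (QuotientGroup.mk z)
        else 0) := by
  have hE := mul_rho_mul_eq_rankOne hHecke ⟨hM⟩ ⟨hρ⟩
  refine ⟨fun x y ζ => by rw [hE, rankOne_apply], fun x y => ?_, fun x y w z => ?_⟩
  · rw [hE, hE, ContinuousLinearMap.star_eq_adjoint, adjoint_rankOne]
  · rw [hE, hE, hE, ContinuousLinearMap.mul_def, rankOne_comp_rankOne,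
      lp.inner_single_one_single_one, ite_smul, one_smul, zero_smul]
end

section
/- Let $(G,H)$ be a discrete Hecke pair, $\nu$ a nondegenerate $*$-representation of $c_0(G/H)$, and $V$ a unital $*$-representation of $\mathcal{H}(G,H)$ on a Hilbert space $\mathcal{H}$. Then $(\nu,V)$ is a covariant pair if and only if there exists a Hilbert space $\mathcal{H}_0$ and a unitary $\Psi: \mathcal{H} \to \mathcal{H}_0 \otimes \ell^2(G/H)$ with $\Psi\nu(f)\Psi^* = 1 \otimes M(f)$ for all $f \in c_0(G/H)$ and $\Psi V(g) \Psi^* = 1 \otimes \rho(g)$ for all $g \in \mathcal{H}(G,H)$. -/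
/-!
Write `P c = ν(ε_c)` and `o = H ∈ G/H`. Multiplying the covariance relation by projections on
both sides isolates single terms, which shows that `A c = P o V(c) P c` satisfies
`A c (A c)* = P o`, `(A c)* A c = P c` and `A d V(a) = ∑_{uH ⊆ HaH} A (d u)`. So the `(A c)*`
are isometries of `ℋ₀ = P o ℋ` onto the mutually orthogonal subspaces `P c ℋ`, which span `ℋ` by
nondegeneracy, and `Ψ ξ = (A c ξ)_c` is the required unitary. Conversely, both sides of the
covariance relation can be evaluated through `Ψ` coordinatewise, where they agree.
-/

open scoped Classical Pointwise

variable {G : Type*} [Group G]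

universe u

theorem finsum_ite_mem_and_mem_eq_sum {α β M : Type*} [AddCommMonoid M] {s : Set α} {t : Set β}
    (hs : s.Finite) (ht : t.Finite) (f : α × β → M) :
    ∑ᶠ p : α × β, (if p.1 ∈ s ∧ p.2 ∈ t then f p else 0) =
      ∑ u ∈ hs.toFinset, ∑ v ∈ ht.toFinset, f (u, v) := by
  rw [← Finset.sum_product', Set.Finite.toFinset_prod, ← finsum_mem_eq_finite_toFinset_sum,
    finsum_mem_def]
  exact finsum_congr fun p => by simp [Set.indicator_apply]

section HilbertSum

variable {E : Type*} [NormedAddCommGroup E] [InnerProductSpace ℂ E] [CompleteSpace E]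

theorem norm_star_apply_eq_of_mul_star_apply {A : E →L[ℂ] E} {y : E} (hy : (A * star A) y = y) :
    ‖star A y‖ = ‖y‖ := by
  have hsq := (star A).apply_norm_sq_eq_inner_adjoint_left y
  rw [← ContinuousLinearMap.star_eq_adjoint, star_star] at hsq
  rw [← sq_eq_sq₀ (norm_nonneg _) (norm_nonneg _), hsq, ← ContinuousLinearMap.mul_def, hy,
    inner_self_eq_norm_sq]

noncomputable def starRestrictIsometry (A : E →L[ℂ] E) (K : Submodule ℂ E)
    (hA : ∀ y ∈ K, (A * star A) y = y) : K →ₗᵢ[ℂ] E where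
  toLinearMap := ((star A : E →L[ℂ] E) : E →ₗ[ℂ] E) ∘ₗ K.subtype
  norm_map' y := norm_star_apply_eq_of_mul_star_apply (hA y y.2)

theorem IsHilbertSum.coe_linearIsometryEquiv_apply {ι : Type*} {K : Submodule ℂ E}
    [CompleteSpace K] {W : ι → K →ₗᵢ[ℂ] E} (hW : IsHilbertSum ℂ (fun _ => K) W) {i : ι}
    (T : E →L[ℂ] E) (hT : ∀ j (y : K), T (W j y) = if j = i then (y : E) else 0) (ξ : E) :
    (hW.linearIsometryEquiv ξ i : E) = T ξ := by
  have hξ : HasSum (fun j => W j (hW.linearIsometryEquiv ξ j)) ξ := by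
    simpa using hW.hasSum_linearIsometryEquiv_symm (hW.linearIsometryEquiv ξ)
  refine ((T.hasSum hξ).unique ?_).symm
  convert hasSum_ite_eq i (hW.linearIsometryEquiv ξ i : E) using 2 with j
  split_ifs with h <;> simp [hT, h]

variable {ι : Type*} {P A : ι → E →L[ℂ] E} {o : ι}
  (hP_sa : ∀ i, IsSelfAdjoint (P i)) (hP_idem : ∀ i, IsIdempotentElem (P i))
  (hP_orth : ∀ i j, i ≠ j → P i * P j = 0)
  (hAA' : ∀ i, A i * star (A i) = P o) (hA'A : ∀ i, star (A i) * A i = P i)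
  (hAP : ∀ i, A i * P i = A i)

include hP_idem hAA' in
theorem mul_star_apply_of_mem_range (i : ι) {y : E} (hy : y ∈ LinearMap.range (P o : E →ₗ[ℂ] E)) :
    (A i * star (A i)) y = y := by
  rw [hAA']
  exact (LinearMap.IsIdempotentElem.mem_range_iff
    (ContinuousLinearMap.IsIdempotentElem.toLinearMap (hP_idem o))).1 hy

include hP_sa hP_idem hP_orth hAA' hA'A hAP in
theorem isHilbertSum_starRestrictIsometry [CompleteSpace (LinearMap.range (P o : E →ₗ[ℂ] E))]
    (hP_nd : (⨆ i, LinearMap.range (P i : E →ₗ[ℂ] E)).topologicalClosure = ⊤) :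
    IsHilbertSum ℂ (fun _ => LinearMap.range (P o : E →ₗ[ℂ] E)) fun i =>
      starRestrictIsometry (A i) _ fun _ => mul_star_apply_of_mem_range hP_idem hAA' i := by
  have hPA' (i : ι) (y : E) : P i (star (A i) y) = star (A i) y := by
    rw [← (hP_sa i).star_eq, ← mul_apply_eq_comp, ← star_mul, hAP]
  refine IsHilbertSum.mk (fun i j hij v w => ?_) ?_
  · change inner ℂ (star (A i) v) (star (A j) w) = 0
    rw [← hPA' i, ← hPA' j, ← (hP_sa i).adjoint_eq, ContinuousLinearMap.adjoint_inner_left,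
      ← mul_apply_eq_comp, hP_orth i j hij, zero_apply, inner_zero_right]
  · refine le_of_eq (Eq.symm ?_)
    rw [← hP_nd]
    congr 2
    ext i z
    constructor
    · rintro ⟨v, rfl⟩
      exact ⟨star (A i) v, hPA' i v⟩
    · rintro ⟨z, rfl⟩
      have hPA : P o * A i = A i := by rw [← hAA', mul_assoc, hA'A, hAP]
      exact ⟨⟨A i z, A i z, congrArg (· z) hPA⟩, congrArg (· z) (hA'A i)⟩

include hP_sa hP_idem hP_orth hAA' hA'A hAP in
theorem exists_linearIsometryEquiv_lp_of_partialIsometries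
    (hP_nd : (⨆ i, LinearMap.range (P i : E →ₗ[ℂ] E)).topologicalClosure = ⊤) :
    ∃ Ψ : E ≃ₗᵢ[ℂ] lp (fun _ : ι => LinearMap.range (P o : E →ₗ[ℂ] E)) 2,
      ∀ ξ i, ((Ψ ξ : ∀ _ : ι, LinearMap.range (P o : E →ₗ[ℂ] E)) i : E) = A i ξ := by
  have := (ContinuousLinearMap.IsIdempotentElem.isClosed_range (hP_idem o)).completeSpace_coe
  have hsum := isHilbertSum_starRestrictIsometry hP_sa hP_idem hP_orth hAA' hA'A hAP hP_nd
  refine ⟨hsum.linearIsometryEquiv, fun ξ i =>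
    hsum.coe_linearIsometryEquiv_apply (A i) (fun j y => ?_) ξ⟩
  change (A i * star (A j)) y = _
  split_ifs with h
  · subst h
    exact mul_star_apply_of_mem_range hP_idem hAA' j y.2
  · rw [← hAP i, ← hAP j, star_mul, (hP_sa j).star_eq, mul_assoc, ← mul_assoc (P i),
      hP_orth i j (Ne.symm h), zero_mul, mul_zero, zero_apply]

end HilbertSum

namespace HeckePair

variable {H : Subgroup G}

section Cosets

theorem mem_dcos_iff {a g : G} : g ∈ dcos H a ↔ ∃ x ∈ H, ∃ y ∈ H, g = x * a * y :=
  DoubleCoset.mem_doubleCoset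

theorem mem_dcos_self (a : G) : a ∈ dcos H a :=
  DoubleCoset.mem_doubleCoset_self H H a

theorem mem_dcos_iff_dcos_eq {a g : G} : g ∈ dcos H a ↔ dcos H g = dcos H a :=
  ⟨DoubleCoset.doubleCoset_eq_of_mem, fun h => h ▸ mem_dcos_self g⟩

theorem dcos_mul_mul {x y : G} (hx : x ∈ H) (hy : y ∈ H) (a : G) :
    dcos H (x * a * y) = dcos H a :=
  mem_dcos_iff_dcos_eq.1 (mem_dcos_iff.2 ⟨x, hx, y, hy, rfl⟩)

theorem inv_mem_dcos_inv_iff {a g : G} : g⁻¹ ∈ dcos H a⁻¹ ↔ g ∈ dcos H a := by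
  suffices ∀ {a g : G}, g ∈ dcos H a → g⁻¹ ∈ dcos H a⁻¹ from
    ⟨fun h => by simpa using this h, this⟩
  intro a g hg
  obtain ⟨x, hx, y, hy, rfl⟩ := mem_dcos_iff.1 hg
  exact mem_dcos_iff.2 ⟨y⁻¹, inv_mem hy, x⁻¹, inv_mem hx, by group⟩

theorem mk_mem_leftCosetsIn {a g : G} : (g : G ⧸ H) ∈ leftCosetsIn H a ↔ g ∈ dcos H a := by
  refine ⟨?_, fun hg => ⟨g, hg, rfl⟩⟩
  rintro ⟨g', hg', hgg'⟩
  have hg : g = 1 * g' * (g'⁻¹ * g) := by group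
  rw [mem_dcos_iff_dcos_eq, hg, dcos_mul_mul (one_mem H) (QuotientGroup.eq.1 hgg'),
    ← mem_dcos_iff_dcos_eq]
  exact hg'

theorem mk_mem_leftCosetsIn_self (g : G) : (g : G ⧸ H) ∈ leftCosetsIn H g :=
  mk_mem_leftCosetsIn.2 (mem_dcos_self g)

theorem out_mem_dcos_iff {a : G} {u : G ⧸ H} :
    Quotient.out u ∈ dcos H a ↔ u ∈ leftCosetsIn H a := by
  rw [← mk_mem_leftCosetsIn, QuotientGroup.out_eq']

theorem smul_mem_leftCosetsIn_iff {a h : G} (hh : h ∈ H) {u : G ⧸ H} :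
    h • u ∈ leftCosetsIn H a ↔ u ∈ leftCosetsIn H a := by
  induction u using QuotientGroup.induction_on with | H g => ?_
  rw [MulAction.Quotient.smul_mk, mk_mem_leftCosetsIn, mk_mem_leftCosetsIn, smul_eq_mul,
    mem_dcos_iff_dcos_eq, mem_dcos_iff_dcos_eq, ← mul_one (h * g), dcos_mul_mul hh (one_mem H)]

theorem mk_mul_out (g : G) (u : G ⧸ H) :
    (QuotientGroup.mk (g * Quotient.out u) : G ⧸ H) = g • u := by
  rw [← smul_eq_mul, ← MulAction.Quotient.smul_mk, QuotientGroup.out_eq']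

theorem smul_coe_one (g : G) : g • ((1 : G) : G ⧸ H) = g := by
  rw [MulAction.Quotient.smul_mk, smul_eq_mul, mul_one]

theorem dcos_out_mk (g : G) : dcos H (Quotient.out (g : G ⧸ H)) = dcos H g := by
  obtain ⟨h, hout⟩ := QuotientGroup.mk_out_eq_mul H g
  rw [hout, ← dcos_mul_mul (one_mem H) h.2 g, one_mul]

theorem dcos_out_mk_inv_mul (g y : G) :
    dcos H ((Quotient.out (g : G ⧸ H))⁻¹ * y) = dcos H (g⁻¹ * y) := by
  obtain ⟨h, hout⟩ := QuotientGroup.mk_out_eq_mul H g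
  rw [hout, show (g * h)⁻¹ * y = (h : G)⁻¹ * (g⁻¹ * y) * 1 by group,
    dcos_mul_mul (inv_mem h.2) (one_mem H)]

theorem inv_smul_smul_mem_leftCosetsIn (x : G) (d v : G ⧸ H) :
    (Quotient.out d)⁻¹ • x • v ∈ leftCosetsIn H ((Quotient.out (x⁻¹ • d))⁻¹ * Quotient.out v) := by
  rw [← mk_mul_out x, ← mk_mul_out x⁻¹, MulAction.Quotient.smul_mk, mk_mem_leftCosetsIn,
    mem_dcos_iff_dcos_eq, dcos_out_mk_inv_mul, smul_eq_mul]
  group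

end Cosets

theorem eq_of_dcos_eq {α : Type*} {V : G → α} (hV_class : ∀ a b : G, b ∈ dcos H a → V b = V a)
    {a b : G} (h : dcos H b = dcos H a) : V b = V a :=
  hV_class a b (mem_dcos_iff_dcos_eq.2 h)

section HeckeSums

variable {M : Type*} [AddCommMonoid M] (hHecke : IsHeckePair H)
include hHecke

theorem finsum_ite_out_mem_dcos (a : G) (f : G ⧸ H → M) :
    ∑ᶠ u : G ⧸ H, (if Quotient.out u ∈ dcos H a then f u else 0) =
      ∑ u ∈ (hHecke a).toFinset, f u := by
  simp_rw [out_mem_dcos_iff]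
  rw [← finsum_mem_eq_finite_toFinset_sum, finsum_mem_def]
  rfl

theorem finsum_prod_ite_out_mem_dcos (a b : G) (f : (G ⧸ H) × (G ⧸ H) → M) :
    ∑ᶠ p : (G ⧸ H) × (G ⧸ H),
        (if Quotient.out p.1 ∈ dcos H a ∧ Quotient.out p.2 ∈ dcos H b then f p else 0) =
      ∑ u ∈ (hHecke a).toFinset, ∑ v ∈ (hHecke b).toFinset, f (u, v) := by
  simp_rw [out_mem_dcos_iff]
  exact finsum_ite_mem_and_mem_eq_sum (hHecke a) (hHecke b) f

theorem sum_out_mk_smul (b g : G) (f : G ⧸ H → M) :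
    ∑ v ∈ (hHecke b).toFinset, f (Quotient.out (g : G ⧸ H) • v) =
      ∑ v ∈ (hHecke b).toFinset, f (g • v) := by
  obtain ⟨h, hout⟩ := QuotientGroup.mk_out_eq_mul H g
  rw [hout]
  refine Finset.sum_equiv (MulAction.toPerm (h : G)) (fun v => ?_) (fun v _ => by simp [mul_smul])
  simp [smul_mem_leftCosetsIn_iff h.2]

end HeckeSums

section Covariance

variable {R : Type*} [Semiring R]

/-- `ν c` stands for `ν(ε_c)` and `V a` for `V([HaH])`. -/
def IsCovariantPair (H : Subgroup G) (ν : G ⧸ H → R) (V : G → R) : Prop :=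
  ∀ a x b : G, V a * ν (QuotientGroup.mk x) * V b =
    ∑ᶠ p : (G ⧸ H) × (G ⧸ H),
      if Quotient.out p.1 ∈ dcos H a⁻¹ ∧ Quotient.out p.2 ∈ dcos H b then
        ν (QuotientGroup.mk (x * Quotient.out p.1)) *
          V ((Quotient.out p.1)⁻¹ * Quotient.out p.2) *
          ν (QuotientGroup.mk (x * Quotient.out p.2))
      else 0

theorem isCovariantPair_iff (hHecke : IsHeckePair H) {ν : G ⧸ H → R} {V : G → R} :
    IsCovariantPair H ν V ↔ ∀ a x b : G, V a * ν (QuotientGroup.mk x) * V b =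
      ∑ u ∈ (hHecke a⁻¹).toFinset, ∑ v ∈ (hHecke b).toFinset,
        ν (x • u) * V ((Quotient.out u)⁻¹ * Quotient.out v) * ν (x • v) := by
  simp only [IsCovariantPair, finsum_prod_ite_out_mem_dcos hHecke, mk_mul_out]

variable {ν : G ⧸ H → R} {V : G → R}

theorem proj_mul_proj (hν_idem : ∀ c, ν c * ν c = ν c) (hν_orth : ∀ c d, c ≠ d → ν c * ν d = 0)
    (c d : G ⧸ H) : ν c * ν d = if c = d then ν c else 0 := by
  split_ifs with h
  · rw [h, hν_idem]
  · exact hν_orth c d h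

theorem proj_mul_covariant (hHecke : IsHeckePair H) (hcov : IsCovariantPair H ν V)
    (hν_idem : ∀ c, ν c * ν c = ν c) (hν_orth : ∀ c d, c ≠ d → ν c * ν d = 0)
    {a x : G} {c : G ⧸ H} (hc : x⁻¹ • c ∈ leftCosetsIn H a⁻¹) (b : G) :
    ν c * (V a * ν (QuotientGroup.mk x) * V b) =
      ∑ v ∈ (hHecke b).toFinset,
        ν c * V ((Quotient.out (x⁻¹ • c))⁻¹ * Quotient.out v) * ν (x • v) := by
  simp only [(isCovariantPair_iff hHecke).1 hcov, Finset.mul_sum, ← mul_assoc,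
    proj_mul_proj hν_idem hν_orth, ite_mul, zero_mul, Finset.sum_ite_irrel, Finset.sum_const_zero,
    ← inv_smul_eq_iff, Finset.sum_ite_eq, (hHecke a⁻¹).mem_toFinset, if_pos hc]

theorem proj_mul_covariant_mul_proj_self (hHecke : IsHeckePair H) (hcov : IsCovariantPair H ν V)
    (hν_idem : ∀ c, ν c * ν c = ν c) (hν_orth : ∀ c d, c ≠ d → ν c * ν d = 0) (hV_one : V 1 = 1)
    {a x b : G} {c : G ⧸ H} (hca : x⁻¹ • c ∈ leftCosetsIn H a⁻¹)
    (hcb : x⁻¹ • c ∈ leftCosetsIn H b) :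
    ν c * (V a * ν (QuotientGroup.mk x) * V b) * ν c = ν c := by
  rw [proj_mul_covariant hHecke hcov hν_idem hν_orth hca, Finset.sum_mul]
  simp only [mul_assoc,
    proj_mul_proj hν_idem hν_orth (x • _) c, mul_ite, mul_zero, smul_eq_iff_eq_inv_smul,
    Finset.sum_ite_eq', (hHecke b).mem_toFinset, if_pos hcb, inv_mul_cancel, hV_one, one_mul,
    smul_inv_smul, hν_idem]

noncomputable def toBase (ν : G ⧸ H → R) (V : G → R) (c : G ⧸ H) : R :=
  ν (1 : G) * V (Quotient.out c) * ν c

noncomputable def fromBase (ν : G ⧸ H → R) (V : G → R) (c : G ⧸ H) : R :=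
  ν c * V (Quotient.out c)⁻¹ * ν (1 : G)

theorem star_toBase [StarRing R] (hν_sa : ∀ c, IsSelfAdjoint (ν c))
    (hV_star : ∀ a : G, star (V a) = V a⁻¹) (c : G ⧸ H) : star (toBase ν V c) = fromBase ν V c := by
  simp only [toBase, fromBase, star_mul, (hν_sa _).star_eq, hV_star, mul_assoc]

theorem toBase_mul_proj (hν_idem : ∀ c, ν c * ν c = ν c)
    (hν_orth : ∀ c d, c ≠ d → ν c * ν d = 0) (c d : G ⧸ H) :
    toBase ν V d * ν c = if d = c then toBase ν V d else 0 := by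
  simp only [toBase, mul_assoc, proj_mul_proj hν_idem hν_orth d c, mul_ite, mul_zero]

variable (hHecke : IsHeckePair H) (hcov : IsCovariantPair H ν V)
  (hν_idem : ∀ c, ν c * ν c = ν c) (hν_orth : ∀ c d, c ≠ d → ν c * ν d = 0)
include hHecke hcov hν_idem hν_orth

theorem toBase_mul_V (hV_class : ∀ a b : G, b ∈ dcos H a → V b = V a) (d : G ⧸ H) (a : G) :
    toBase ν V d * V a = ∑ u ∈ (hHecke a).toFinset, toBase ν V (Quotient.out d • u) := by
  have hc : (Quotient.out d)⁻¹ • ((1 : G) : G ⧸ H) ∈ leftCosetsIn H (Quotient.out d)⁻¹ := by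
    rw [smul_coe_one]
    exact mk_mem_leftCosetsIn_self _
  rw [show toBase ν V d * V a = ν (1 : G) * (V (Quotient.out d) *
      ν (QuotientGroup.mk (Quotient.out d)) * V a) by
        simp only [toBase, QuotientGroup.out_eq', mul_assoc],
    proj_mul_covariant hHecke hcov hν_idem hν_orth hc a, smul_coe_one]
  refine Finset.sum_congr rfl fun u _ => ?_
  rw [toBase, ← mk_mul_out, eq_of_dcos_eq hV_class (dcos_out_mk_inv_mul _ _), inv_inv,
    eq_of_dcos_eq hV_class (dcos_out_mk _)]

variable (hV_one : V 1 = 1)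
include hV_one

theorem toBase_mul_fromBase (c : G ⧸ H) : toBase ν V c * fromBase ν V c = ν (1 : G) := by
  have hc : (Quotient.out c)⁻¹ • ((1 : G) : G ⧸ H) ∈ leftCosetsIn H (Quotient.out c)⁻¹ := by
    rw [smul_coe_one]
    exact mk_mem_leftCosetsIn_self _
  calc toBase ν V c * fromBase ν V c
      = ν (1 : G) * (V (Quotient.out c) * ν (QuotientGroup.mk (Quotient.out c)) *
          V (Quotient.out c)⁻¹) * ν (1 : G) := by
        simp only [toBase, fromBase, QuotientGroup.out_eq', mul_assoc]
        rw [← mul_assoc (ν c) (ν c), hν_idem]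
    _ = ν (1 : G) :=
        proj_mul_covariant_mul_proj_self hHecke hcov hν_idem hν_orth hV_one hc hc

theorem fromBase_mul_toBase (c : G ⧸ H) : fromBase ν V c * toBase ν V c = ν c := by
  have hc : (1 : G)⁻¹ • c ∈ leftCosetsIn H (Quotient.out c) := by
    rw [inv_one, one_smul, ← out_mem_dcos_iff]
    exact mem_dcos_self _
  calc fromBase ν V c * toBase ν V c
      = ν c * (V (Quotient.out c)⁻¹ * ν (QuotientGroup.mk 1) * V (Quotient.out c)) * ν c := by
        simp only [toBase, fromBase, mul_assoc]
        rw [← mul_assoc (ν (1 : G)) (ν (1 : G)), hν_idem]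
    _ = ν c :=
        proj_mul_covariant_mul_proj_self hHecke hcov hν_idem hν_orth hV_one
          (by rwa [inv_inv]) hc

end Covariance

section Backward

variable {E H₀ : Type*} [NormedAddCommGroup E] [NormedSpace ℂ E] [NormedAddCommGroup H₀]
  [NormedSpace ℂ H₀] (hHecke : IsHeckePair H) {ν : G ⧸ H → E →L[ℂ] E} {V : G → E →L[ℂ] E}
  (Ψ : E ≃ₗᵢ[ℂ] lp (fun _ : G ⧸ H => H₀) 2)
  (hM : ∀ (c : G ⧸ H) (ξ : E) (d : G ⧸ H),
    (Ψ (ν c ξ) : ∀ _ : G ⧸ H, H₀) d = if d = c then (Ψ ξ : ∀ _ : G ⧸ H, H₀) d else 0)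
  (hR : ∀ (a : G) (ξ : E) (d : G ⧸ H),
    (Ψ (V a ξ) : ∀ _ : G ⧸ H, H₀) d =
      ∑ u ∈ (hHecke a).toFinset, (Ψ ξ : ∀ _ : G ⧸ H, H₀) (Quotient.out d • u))
include hM hR

theorem apply_covariant_left (a x b : G) (ξ : E) (d : G ⧸ H) :
    (Ψ ((V a * ν (QuotientGroup.mk x) * V b) ξ) : ∀ _ : G ⧸ H, H₀) d =
      if (Quotient.out d)⁻¹ * x ∈ dcos H a then
        ∑ v ∈ (hHecke b).toFinset, (Ψ ξ : ∀ _ : G ⧸ H, H₀) (x • v)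
      else 0 := by
  simp only [mul_apply_eq_comp, hR, hM, smul_eq_iff_eq_inv_smul, Finset.sum_ite_eq',
    (hHecke a).mem_toFinset, smul_inv_smul, sum_out_mk_smul hHecke]
  rw [MulAction.Quotient.smul_mk, mk_mem_leftCosetsIn, smul_eq_mul]

theorem apply_covariant_right (a x b : G) (ξ : E) (d : G ⧸ H) :
    (Ψ ((∑ u ∈ (hHecke a⁻¹).toFinset, ∑ v ∈ (hHecke b).toFinset,
        ν (x • u) * V ((Quotient.out u)⁻¹ * Quotient.out v) * ν (x • v)) ξ) :
          ∀ _ : G ⧸ H, H₀) d =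
      if (Quotient.out d)⁻¹ * x ∈ dcos H a then
        ∑ v ∈ (hHecke b).toFinset, (Ψ ξ : ∀ _ : G ⧸ H, H₀) (x • v)
      else 0 := by
  simp only [sum_apply, map_sum, lp.coeFn_sum, Finset.sum_apply, mul_apply_eq_comp, hM]
  simp only [← inv_smul_eq_iff, Finset.sum_ite_irrel, Finset.sum_const_zero, Finset.sum_ite_eq,
    (hHecke a⁻¹).mem_toFinset]
  simp only [hR, hM, smul_eq_iff_eq_inv_smul, Finset.sum_ite_eq', Set.Finite.mem_toFinset,
    inv_smul_smul_mem_leftCosetsIn, if_true, smul_inv_smul]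
  rw [← mk_mul_out, mk_mem_leftCosetsIn, ← inv_mem_dcos_inv_iff (a := a), mul_inv_rev, inv_inv]

end Backward

theorem isCovariantPair_of_lp_intertwiner {E H₀ : Type*} [NormedAddCommGroup E] [NormedSpace ℂ E]
    [NormedAddCommGroup H₀] [NormedSpace ℂ H₀] (hHecke : IsHeckePair H)
    {ν : G ⧸ H → E →L[ℂ] E} {V : G → E →L[ℂ] E} (Ψ : E ≃ₗᵢ[ℂ] lp (fun _ : G ⧸ H => H₀) 2)
    (hM : ∀ (c : G ⧸ H) (ξ : E) (d : G ⧸ H),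
      (Ψ (ν c ξ) : ∀ _ : G ⧸ H, H₀) d = if d = c then (Ψ ξ : ∀ _ : G ⧸ H, H₀) d else 0)
    (hR : ∀ (a : G) (ξ : E) (d : G ⧸ H),
      (Ψ (V a ξ) : ∀ _ : G ⧸ H, H₀) d =
        ∑ᶠ u : G ⧸ H,
          if Quotient.out u ∈ dcos H a then
            (Ψ ξ : ∀ _ : G ⧸ H, H₀) (QuotientGroup.mk (Quotient.out d * Quotient.out u))
          else 0) :
    IsCovariantPair H ν V := by
  simp only [finsum_ite_out_mem_dcos hHecke, mk_mul_out] at hR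
  refine (isCovariantPair_iff hHecke).2 fun a x b => ?_
  ext ξ
  refine Ψ.injective (lp.ext (funext fun d => ?_))
  rw [apply_covariant_left hHecke Ψ hM hR, apply_covariant_right hHecke Ψ hM hR]

theorem exists_lp_intertwiner_of_isCovariantPair {E : Type u} [NormedAddCommGroup E]
    [InnerProductSpace ℂ E] [CompleteSpace E] (hHecke : IsHeckePair H)
    {ν : G ⧸ H → E →L[ℂ] E} {V : G → E →L[ℂ] E}
    (hν_sa : ∀ c, IsSelfAdjoint (ν c)) (hν_idem : ∀ c, ν c * ν c = ν c)
    (hν_orth : ∀ c d, c ≠ d → ν c * ν d = 0)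
    (hν_nd : (⨆ c : G ⧸ H, LinearMap.range (ν c : E →ₗ[ℂ] E)).topologicalClosure = ⊤)
    (hV_class : ∀ a b : G, b ∈ dcos H a → V b = V a)
    (hV_one : V 1 = 1) (hV_star : ∀ a : G, star (V a) = V a⁻¹) (hcov : IsCovariantPair H ν V) :
    ∃ (H₀ : Type u) (_ : NormedAddCommGroup H₀) (_ : InnerProductSpace ℂ H₀)
        (_ : CompleteSpace H₀) (Ψ : E ≃ₗᵢ[ℂ] lp (fun _ : G ⧸ H => H₀) 2),
      (∀ (c : G ⧸ H) (ξ : E) (d : G ⧸ H),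
        (Ψ (ν c ξ) : ∀ _ : G ⧸ H, H₀) d =
          if d = c then (Ψ ξ : ∀ _ : G ⧸ H, H₀) d else 0) ∧
      (∀ (a : G) (ξ : E) (d : G ⧸ H),
        (Ψ (V a ξ) : ∀ _ : G ⧸ H, H₀) d =
          ∑ᶠ u : G ⧸ H,
            if Quotient.out u ∈ dcos H a then
              (Ψ ξ : ∀ _ : G ⧸ H, H₀)
                (QuotientGroup.mk (Quotient.out d * Quotient.out u))
            else 0) := by
  obtain ⟨Ψ, hΨ⟩ := exists_linearIsometryEquiv_lp_of_partialIsometries (o := ((1 : G) : G ⧸ H))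
    hν_sa hν_idem hν_orth
    (fun c => star_toBase hν_sa hV_star c ▸
      toBase_mul_fromBase hHecke hcov hν_idem hν_orth hV_one c)
    (fun c => star_toBase hν_sa hV_star c ▸
      fromBase_mul_toBase hHecke hcov hν_idem hν_orth hV_one c)
    (fun c => by simpa using toBase_mul_proj hν_idem hν_orth (V := V) c c) hν_nd
  refine ⟨LinearMap.range (ν (1 : G) : E →ₗ[ℂ] E), inferInstance, inferInstance,
    (ContinuousLinearMap.IsIdempotentElem.isClosed_range (hν_idem (1 : G))).completeSpace_coe, Ψ,
    fun c ξ d => Subtype.ext ?_, fun a ξ d => Subtype.ext ?_⟩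
  · rw [hΨ, ← mul_apply_eq_comp, toBase_mul_proj hν_idem hν_orth]
    split_ifs <;> simp [hΨ]
  · rw [hΨ, ← mul_apply_eq_comp, toBase_mul_V hHecke hcov hν_idem hν_orth hV_class,
      finsum_ite_out_mem_dcos hHecke, Submodule.coe_sum, sum_apply]
    simp only [mk_mul_out, hΨ]

end HeckePair

theorem stmt13_general {E : Type u} [NormedAddCommGroup E] [InnerProductSpace ℂ E] [CompleteSpace E]
    (H : Subgroup G) (hHecke : IsHeckePair H)
    (ν : G ⧸ H → E →L[ℂ] E) (V : G → E →L[ℂ] E)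
    (hν_sa : ∀ c, IsSelfAdjoint (ν c)) (hν_idem : ∀ c, ν c * ν c = ν c)
    (hν_orth : ∀ c d, c ≠ d → ν c * ν d = 0)
    (hν_nd : (⨆ c : G ⧸ H, LinearMap.range (ν c : E →ₗ[ℂ] E)).topologicalClosure = ⊤)
    (hV_class : ∀ a b : G, b ∈ dcos H a → V b = V a)
    (hV_one : V 1 = 1) (hV_star : ∀ a : G, star (V a) = V a⁻¹) :
    -- `(ν, V)` is a covariant pair …
    (∀ a x b : G,
      V a * ν (QuotientGroup.mk x) * V b =
        ∑ᶠ p : (G ⧸ H) × (G ⧸ H),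
          if Quotient.out p.1 ∈ dcos H a⁻¹ ∧ Quotient.out p.2 ∈ dcos H b then
            ν (QuotientGroup.mk (x * Quotient.out p.1)) *
              V ((Quotient.out p.1)⁻¹ * Quotient.out p.2) *
              ν (QuotientGroup.mk (x * Quotient.out p.2))
          else 0)
    ↔
    -- … iff `(ν, V)` is unitarily equivalent to `(1 ⊗ M, 1 ⊗ ρ)`.
    (∃ (H₀ : Type u) (_ : NormedAddCommGroup H₀) (_ : InnerProductSpace ℂ H₀)
        (_ : CompleteSpace H₀) (Ψ : E ≃ₗᵢ[ℂ] lp (fun _ : G ⧸ H => H₀) 2),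
      (∀ (c : G ⧸ H) (ξ : E) (d : G ⧸ H),
        (Ψ (ν c ξ) : ∀ _ : G ⧸ H, H₀) d =
          if d = c then (Ψ ξ : ∀ _ : G ⧸ H, H₀) d else 0) ∧
      (∀ (a : G) (ξ : E) (d : G ⧸ H),
        (Ψ (V a ξ) : ∀ _ : G ⧸ H, H₀) d =
          ∑ᶠ u : G ⧸ H,
            if Quotient.out u ∈ dcos H a then
              (Ψ ξ : ∀ _ : G ⧸ H, H₀)
                (QuotientGroup.mk (Quotient.out d * Quotient.out u))
            else 0)) :=
  ⟨HeckePair.exists_lp_intertwiner_of_isCovariantPair hHecke hν_sa hν_idem hν_orth hν_nd hV_class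
    hV_one hV_star,
  fun ⟨_, _, _, _, Ψ, hM, hR⟩ => HeckePair.isCovariantPair_of_lp_intertwiner hHecke Ψ hM hR⟩

/-- Theorem 1.5(ii): `(ν, V)` is a covariant pair for the discrete Hecke pair `(G,H)` iff
there is a Hilbert space `ℋ₀` and a unitary `Ψ : ℋ ≃ ℋ₀ ⊗ ℓ²(G/H)`
(realised as `ℓ²(G/H; ℋ₀)`) intertwining `ν` with `1 ⊗ M` and `V` with `1 ⊗ ρ`. -/
theorem stmt13 {E : Type u} [NormedAddCommGroup E] [InnerProductSpace ℂ E] [CompleteSpace E]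
    (H : Subgroup G) (hHecke : IsHeckePair H)
    (ν : G ⧸ H → E →L[ℂ] E) (V : G → E →L[ℂ] E)
    (hν_sa : ∀ c, IsSelfAdjoint (ν c)) (hν_idem : ∀ c, ν c * ν c = ν c)
    (hν_orth : ∀ c d, c ≠ d → ν c * ν d = 0)
    (hν_nd : (⨆ c : G ⧸ H, LinearMap.range (ν c : E →ₗ[ℂ] E)).topologicalClosure = ⊤)
    (hV_class : ∀ a b : G, b ∈ dcos H a → V b = V a)
    (hV_one : V 1 = 1) (hV_star : ∀ a : G, star (V a) = V a⁻¹)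
    (hV_mul : ∀ a b : G, V a * V b =
      ∑ᶠ c : DoubleCoset.Quotient (H : Set G) (H : Set G),
        (Nat.card ↥{d : G ⧸ H | Quotient.out d ∈ dcos H a ∧
            (Quotient.out d)⁻¹ * Quotient.out c ∈ dcos H b} : ℂ) • V (Quotient.out c)) :
    -- `(ν, V)` is a covariant pair …
    (∀ a x b : G,
      V a * ν (QuotientGroup.mk x) * V b =
        ∑ᶠ p : (G ⧸ H) × (G ⧸ H),
          if Quotient.out p.1 ∈ dcos H a⁻¹ ∧ Quotient.out p.2 ∈ dcos H b then
            ν (QuotientGroup.mk (x * Quotient.out p.1)) *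
              V ((Quotient.out p.1)⁻¹ * Quotient.out p.2) *
              ν (QuotientGroup.mk (x * Quotient.out p.2))
          else 0)
    ↔
    -- … iff `(ν, V)` is unitarily equivalent to `(1 ⊗ M, 1 ⊗ ρ)`.
    (∃ (H₀ : Type u) (_ : NormedAddCommGroup H₀) (_ : InnerProductSpace ℂ H₀)
        (_ : CompleteSpace H₀) (Ψ : E ≃ₗᵢ[ℂ] lp (fun _ : G ⧸ H => H₀) 2),
      (∀ (c : G ⧸ H) (ξ : E) (d : G ⧸ H),
        (Ψ (ν c ξ) : ∀ _ : G ⧸ H, H₀) d =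
          if d = c then (Ψ ξ : ∀ _ : G ⧸ H, H₀) d else 0) ∧
      (∀ (a : G) (ξ : E) (d : G ⧸ H),
        (Ψ (V a ξ) : ∀ _ : G ⧸ H, H₀) d =
          ∑ᶠ u : G ⧸ H,
            if Quotient.out u ∈ dcos H a then
              (Ψ ξ : ∀ _ : G ⧸ H, H₀)
                (QuotientGroup.mk (Quotient.out d * Quotient.out u))
            else 0)) :=
  stmt13_general H hHecke ν V hν_sa hν_idem hν_orth hν_nd hV_class hV_one hV_star
end

section
/- Let $G = N \rtimes Q$ with $Q = S^{-1}S$ for an Ore semigroup $S$ acting on $N$, and let $H \trianglelefteq N$ satisfy $sH = HsH$ and $|H\backslash HsH| < \infty$ for all $s \in S$. Then for each $s \in S$: $[HsH]\cdot[Hs^{-1}H] = \chi_{sHs^{-1}}$ in the Hecke algebra $\mathcal{H}(G,H)$, i.e. $[HsH][Hs^{-1}H] = \sum_{mH \subseteq sHs^{-1}H} [HmH]$, a sum over the left cosets of $H$ in $N$ contained in $sHs^{-1}H$. -/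
open scoped Classical Pointwise

variable {G : Type*} [Group G]

/-
Since `sH = HsH`, the double coset `HsH` is the single left coset `sH`, so in the left-hand sum
only the coset `d = sH` contributes. Every `m ∈ sHs⁻¹H` lies in `N`, where `H` is normal, so
`HmH = mH` and in the right-hand sum only the coset `d = xH` contributes. Both surviving terms
are the indicator of `s⁻¹x ∈ Hs⁻¹H`, i.e. of `x ∈ sHs⁻¹H`.
-/

theorem finsum_ite_eq_ite_of_imp {α M : Type*} [AddCommMonoid M] {p : α → Prop}
    [DecidablePred p] (a : α) (hp : ∀ b, p b → b = a) (c : M) :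
    ∑ᶠ b, (if p b then c else 0) = if p a then c else 0 :=
  finsum_eq_single _ a fun b hb => if_neg fun h => hb (hp b h)

section DoubleCoset

variable {H : Subgroup G} {a b g h k m : G}

theorem mem_dcos_iff : b ∈ dcos H a ↔ dcos H b = dcos H a :=
  ⟨DoubleCoset.doubleCoset_eq_of_mem, fun e => e ▸ DoubleCoset.mem_doubleCoset_self H H b⟩

theorem dcos_mul_mul (hh : h ∈ H) (hk : k ∈ H) : dcos H (h * g * k) = dcos H g :=
  DoubleCoset.doubleCoset_eq_of_mem (DoubleCoset.mem_doubleCoset.mpr ⟨h, hh, k, hk, rfl⟩)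

theorem mul_mul_mem_dcos_iff (hh : h ∈ H) (hk : k ∈ H) :
    h * g * k ∈ dcos H a ↔ g ∈ dcos H a := by
  rw [mem_dcos_iff, mem_dcos_iff, dcos_mul_mul hh hk]

theorem out_mk_mem_dcos (a : G) : Quotient.out (a : G ⧸ H) ∈ dcos H a := by
  obtain ⟨h, hh⟩ := QuotientGroup.mk_out_eq_mul H a
  exact DoubleCoset.mem_doubleCoset.mpr ⟨1, H.one_mem, h, h.2, by rw [hh, one_mul]⟩

theorem mem_dcos_out_mk (g : G) : g ∈ dcos H (Quotient.out (g : G ⧸ H)) :=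
  mem_dcos_iff.mpr (mem_dcos_iff.mp (out_mk_mem_dcos g)).symm

theorem mk_eq_of_mem_dcos (hm : dcos H m ⊆ (fun h => m * h) '' H) (hg : g ∈ dcos H m) :
    (g : G ⧸ H) = m := by
  obtain ⟨h, hh, rfl⟩ := hm hg
  exact QuotientGroup.mk_mul_of_mem m hh

theorem dcos_subset_image_mul_of_conj_mem (hm : ∀ h ∈ H, m⁻¹ * h * m ∈ H) :
    dcos H m ⊆ (fun h => m * h) '' H := by
  intro g hg
  obtain ⟨h, hh, k, hk, rfl⟩ := DoubleCoset.mem_doubleCoset.mp hg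
  exact ⟨m⁻¹ * h * m * k, H.mul_mem (hm h hh) hk, by group⟩

theorem mem_conj_mul_iff (s x : G) :
    x ∈ {g : G | ∃ h ∈ H, ∃ k ∈ H, g = s * h * s⁻¹ * k} ↔ s⁻¹ * x ∈ dcos H s⁻¹ := by
  simp only [Set.mem_ofPred_eq, dcos, DoubleCoset.mem_doubleCoset, SetLike.mem_coe]
  refine exists_congr fun h => and_congr_right fun _ => exists_congr fun k => and_congr_right
    fun _ => ?_
  constructor <;> intro e
  · rw [e]; group
  · rw [← mul_inv_cancel_left s x, e]; group

end DoubleCoset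

theorem stmt14_general
    (N H : Subgroup G) (hNnormal : N.Normal)
    (S : Subsemigroup G)
    (hHN : H ≤ N) (hHnormN : ∀ n ∈ N, ∀ h ∈ H, n * h * n⁻¹ ∈ H)
    (hsH : ∀ s ∈ S, (fun h => s * h) '' (H : Set G) = dcos H s)
    (s : G) (hsS : s ∈ S) :
    ∀ x : G,
      (∑ᶠ d : G ⧸ H,
          if Quotient.out d ∈ dcos H s ∧ (Quotient.out d)⁻¹ * x ∈ dcos H s⁻¹ then
            (1 : ℂ) else 0)
        = ∑ᶠ d : G ⧸ H,
            if Quotient.out d ∈ {g : G | ∃ h ∈ H, ∃ k ∈ H, g = s * h * s⁻¹ * k} ∧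
                x ∈ dcos H (Quotient.out d) then (1 : ℂ) else 0 := by
  intro x
  have hs : ∀ g ∈ dcos H s, (g : G ⧸ H) = s := fun g => mk_eq_of_mem_dcos (hsH s hsS).ge
  have hx : ∀ m ∈ {g : G | ∃ h ∈ H, ∃ k ∈ H, g = s * h * s⁻¹ * k}, x ∈ dcos H m →
      (x : G ⧸ H) = m := by
    rintro m ⟨h, hh, k, hk, rfl⟩
    have hmN : s * h * s⁻¹ * k ∈ N := N.mul_mem (hNnormal.conj_mem h (hHN hh) s) (hHN hk)
    refine mk_eq_of_mem_dcos (dcos_subset_image_mul_of_conj_mem fun h' hh' => ?_)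
    simpa using hHnormN _ (N.inv_mem hmN) h' hh'
  rw [finsum_ite_eq_ite_of_imp (s : G ⧸ H)
      (fun d hd => (QuotientGroup.out_eq' d).symm.trans (hs _ hd.1)),
    finsum_ite_eq_ite_of_imp (x : G ⧸ H)
      (fun d hd => ((hx _ hd.1 hd.2).trans (QuotientGroup.out_eq' d)).symm)]
  obtain ⟨h₀, hh₀⟩ := QuotientGroup.mk_out_eq_mul H s
  obtain ⟨h₁, hh₁⟩ := QuotientGroup.mk_out_eq_mul H x
  have key : (Quotient.out (s : G ⧸ H))⁻¹ * x ∈ dcos H s⁻¹ ↔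
      s⁻¹ * Quotient.out (x : G ⧸ H) ∈ dcos H s⁻¹ := by
    rw [hh₀, hh₁, show (s * h₀)⁻¹ * x = (h₀ : G)⁻¹ * (s⁻¹ * x) * 1 by group,
      show s⁻¹ * (x * h₁) = 1 * (s⁻¹ * x) * h₁ by group,
      mul_mul_mem_dcos_iff (H.inv_mem h₀.2) H.one_mem, mul_mul_mem_dcos_iff H.one_mem h₁.2]
  simp only [out_mk_mem_dcos, mem_dcos_out_mk, true_and, and_true, mem_conj_mul_iff, key]

/-- In the Laca–Larsen setting (`G = N ⋊ Q`, `Q = S⁻¹S` for an Ore semigroup `S`,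
`H ⊴ N` with `sH = HsH` and `R(s) < ∞` for `s ∈ S`), for each `s ∈ S` one has
`[HsH]⋅[Hs⁻¹H] = χ_{sHs⁻¹} = ∑_{mH ⊆ sHs⁻¹H} [HmH]` in the Hecke algebra,
expressed pointwise via the convolution formula. -/
theorem stmt14
    (N Q H : Subgroup G) (hNnormal : N.Normal)
    (hsd1 : N ⊓ Q = ⊥) (hsd2 : N ⊔ Q = ⊤)
    (S : Subsemigroup G) (hSQ : (S : Set G) ⊆ (Q : Set G))
    (hOre : ∀ s t : S, ∃ u v : S, (u : G) * s = (v : G) * t)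
    (hQS : ∀ q ∈ Q, ∃ s ∈ S, ∃ t ∈ S, q = s⁻¹ * t)
    (hHN : H ≤ N) (hHnormN : ∀ n ∈ N, ∀ h ∈ H, n * h * n⁻¹ ∈ H)
    (hsH : ∀ s ∈ S, (fun h => s * h) '' (H : Set G) = dcos H s)
    (hHecke : IsHeckePair H)
    (s : G) (hsS : s ∈ S) :
    ∀ x : G,
      (∑ᶠ d : G ⧸ H,
          if Quotient.out d ∈ dcos H s ∧ (Quotient.out d)⁻¹ * x ∈ dcos H s⁻¹ then
            (1 : ℂ) else 0)
        = ∑ᶠ d : G ⧸ H,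
            if Quotient.out d ∈ {g : G | ∃ h ∈ H, ∃ k ∈ H, g = s * h * s⁻¹ * k} ∧
                x ∈ dcos H (Quotient.out d) then (1 : ℂ) else 0 :=
  stmt14_general N H hNnormal S hHN hHnormN hsH s hsS
end

section
/- In the setting $G = N \rtimes Q$, $Q = S^{-1}S$, $H \trianglelefteq N$ with $sH = HsH$ and $R(s) < \infty$ for $s \in S$: for $s, t \in S$ and $n \in N$, the Hecke algebra satisfies $[Hs^{-1}H]\cdot[HnH]\cdot[HtH] = \frac{R(t)}{R(s^{-1}t)}[Hs^{-1}ntH]$. -/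
open scoped Classical Pointwise

variable {G : Type*} [Group G]

/-!
Put `c = s⁻¹n`. Since `s⁻¹Hs ⊆ H` and `n` normalises `H`, we have `Hs⁻¹H = Hs⁻¹`, `HnH = nH`
and `HcH = Hc`, so `[Hs⁻¹H]⋅[HnH] = [HcH]`, and `HtH = tH`. The coefficient of
`x = h₀ (c t) h₁` in `[HcH]⋅[HtH]` counts the cosets `dH ⊆ Hc` with `x ∈ dHtH`; they form the
orbit of `h₀cH` under `H ∩ qHq⁻¹`, `q = h₀ct`, with stabiliser `(h₀c)H(h₀c)⁻¹`. Conjugating by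
`q⁻¹`, the orbit has `[H ∩ q⁻¹Hq : t⁻¹Ht]` elements, and `R(g) = [H : H ∩ g⁻¹Hg]` turns the
tower `t⁻¹Ht ≤ H ∩ q⁻¹Hq ≤ H` into `R(t) = [H ∩ q⁻¹Hq : t⁻¹Ht] ⋅ R(q)`. Finally
`R(q) = R(s⁻¹nt) = R(s⁻¹t)` because `s⁻¹ns ∈ N` normalises `H`.
-/

section

open ConjAct MulAction Subgroup

variable {H : Subgroup G} {a b c t x y : G}

lemma mem_conjAct_smul_iff {g : G} : y ∈ toConjAct g • H ↔ g⁻¹ * y * g ∈ H := by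
  rw [Subgroup.mem_pointwise_smul_iff_inv_smul_mem, ← toConjAct_inv, toConjAct_inv_smul]

lemma mem_dcos_iff_exists : x ∈ dcos H a ↔ ∃ h₁ ∈ H, ∃ h₂ ∈ H, x = h₁ * a * h₂ :=
  DoubleCoset.mem_doubleCoset

lemma mem_dcos_iff_mul_inv_mem (ha : ∀ h ∈ H, a * h * a⁻¹ ∈ H) :
    x ∈ dcos H a ↔ x * a⁻¹ ∈ H := by
  refine ⟨fun hx => ?_, fun hx => mem_dcos_iff_exists.2 ⟨_, hx, 1, H.one_mem, by group⟩⟩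
  obtain ⟨h₁, hh₁, h₂, hh₂, rfl⟩ := mem_dcos_iff_exists.1 hx
  simpa [mul_assoc] using H.mul_mem hh₁ (ha h₂ hh₂)

lemma mem_dcos_iff_inv_mul_mem (ha : ∀ h ∈ H, a⁻¹ * h * a ∈ H) :
    x ∈ dcos H a ↔ a⁻¹ * x ∈ H := by
  refine ⟨fun hx => ?_, fun hx => mem_dcos_iff_exists.2 ⟨1, H.one_mem, _, hx, by group⟩⟩
  obtain ⟨h₁, hh₁, h₂, hh₂, rfl⟩ := mem_dcos_iff_exists.1 hx
  simpa [mul_assoc] using H.mul_mem (ha h₁ hh₁) hh₂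

lemma mul_mem_dcos (hx : x ∈ dcos H a) {h : G} (hh : h ∈ H) : x * h ∈ dcos H a := by
  obtain ⟨h₁, hh₁, h₂, hh₂, rfl⟩ := mem_dcos_iff_exists.1 hx
  exact mem_dcos_iff_exists.2 ⟨h₁, hh₁, h₂ * h, H.mul_mem hh₂ hh, by group⟩

lemma mul_mem_dcos_iff {h : G} (hh : h ∈ H) : x * h ∈ dcos H a ↔ x ∈ dcos H a :=
  ⟨fun hx => by simpa using mul_mem_dcos hx (H.inv_mem hh), fun hx => mul_mem_dcos hx hh⟩

lemma inv_mul_mul_mem_of_image_mul_eq_dcos (ha : (fun h => a * h) '' (H : Set G) = dcos H a)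
    {h : G} (hh : h ∈ H) : a⁻¹ * h * a ∈ H := by
  have : h * a ∈ dcos H a := mem_dcos_iff_exists.2 ⟨h, hh, 1, H.one_mem, by group⟩
  rw [← ha] at this
  obtain ⟨h', hh', he⟩ := this
  simpa [mul_assoc, ← he] using hh'

lemma leftCosetsIn_eq_orbit : leftCosetsIn H a = orbit H (a : G ⧸ H) := by
  ext d
  constructor
  · rintro ⟨x, hx, rfl⟩
    obtain ⟨h₁, hh₁, h₂, hh₂, rfl⟩ := mem_dcos_iff_exists.1 hx
    exact ⟨⟨h₁, hh₁⟩, QuotientGroup.eq.2 (by simpa [mul_assoc] using hh₂)⟩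
  · rintro ⟨h, rfl⟩
    exact ⟨h * a, mem_dcos_iff_exists.2 ⟨h, h.2, 1, H.one_mem, by group⟩, rfl⟩

lemma ncard_orbit_mk (K : Subgroup G) (p : G) :
    (orbit K (p : G ⧸ H)).ncard = (toConjAct p • H).relIndex K := by
  rw [← index_stabilizer, Subgroup.relIndex]
  congr 1
  ext k
  rw [mem_stabilizer_iff, Subgroup.mem_subgroupOf, mem_conjAct_smul_iff]
  change ((k * p : G) : G ⧸ H) = p ↔ _
  rw [eq_comm, QuotientGroup.eq, mul_assoc]

lemma inv_mem_dcos_inv (hx : x ∈ dcos H a) : x⁻¹ ∈ dcos H a⁻¹ := by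
  obtain ⟨h₁, hh₁, h₂, hh₂, rfl⟩ := mem_dcos_iff_exists.1 hx
  exact mem_dcos_iff_exists.2 ⟨h₂⁻¹, H.inv_mem hh₂, h₁⁻¹, H.inv_mem hh₁, by group⟩

lemma Rcount_eq_ncard_leftCosetsIn_inv : Rcount H a = (leftCosetsIn H a⁻¹).ncard := by
  rw [Rcount, ← Nat.card_coe_set_eq,
    ← Nat.card_image_of_injective (QuotientGroup.quotientRightRelEquivQuotientLeftRel H).injective]
  congr 2
  ext d
  constructor
  · rintro ⟨_, ⟨g, hg, rfl⟩, rfl⟩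
    exact ⟨g⁻¹, inv_mem_dcos_inv hg, rfl⟩
  · rintro ⟨g, hg, rfl⟩
    exact ⟨_, ⟨g⁻¹, by simpa using inv_mem_dcos_inv hg, rfl⟩, congrArg _ (inv_inv g)⟩

lemma Rcount_eq_relIndex : Rcount H a = (toConjAct a⁻¹ • H).relIndex H := by
  rw [Rcount_eq_ncard_leftCosetsIn_inv, leftCosetsIn_eq_orbit, ncard_orbit_mk]

lemma Rcount_ne_zero (hH : IsHeckePair H) (a : G) : Rcount H a ≠ 0 := by
  rw [Rcount_eq_ncard_leftCosetsIn_inv]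
  have ha : a⁻¹ ∈ dcos H a⁻¹ := mem_dcos_iff_exists.2 ⟨1, H.one_mem, 1, H.one_mem, by group⟩
  exact ((Set.ncard_pos (hH a⁻¹)).2 ⟨_, a⁻¹, ha, rfl⟩).ne'

lemma Rcount_mul_of_mem_normalizer {m : G} (hm : m ∈ normalizer (H : Set G)) (a : G) :
    Rcount H (m * a) = Rcount H a := by
  rw [Rcount_eq_relIndex, Rcount_eq_relIndex, mul_inv_rev, toConjAct_mul, mul_smul,
    conjAct_pointwise_smul_eq_self (inv_mem hm)]

lemma out_mk_mem_dcos_iff : Quotient.out (y : G ⧸ H) ∈ dcos H a ↔ y ∈ dcos H a := by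
  obtain ⟨h, hh⟩ := QuotientGroup.mk_out_eq_mul H y
  rw [hh, mul_mem_dcos_iff h.2]

lemma mul_inv_mem_dcos_iff_of_mem_normalizer (hb : b ∈ normalizer (H : Set G)) :
    y * b⁻¹ ∈ dcos H a ↔ y ∈ dcos H (a * b) := by
  rw [mem_normalizer_iff] at hb
  constructor <;> intro hy <;> obtain ⟨h₁, hh₁, h₂, hh₂, he⟩ := mem_dcos_iff_exists.1 hy
  · refine mem_dcos_iff_exists.2 ⟨h₁, hh₁, b⁻¹ * h₂ * b, (hb _).2 ?_, ?_⟩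
    · simpa [mul_assoc] using hh₂
    · rw [mul_inv_eq_iff_eq_mul.1 he]
      group
  · exact mem_dcos_iff_exists.2 ⟨h₁, hh₁, b * h₂ * b⁻¹, (hb h₂).1 hh₂, by rw [he]; group⟩

theorem finsum_convolution_eq_of_mem_normalizer {R : Type*} [AddCommMonoidWithOne R]
    (hb : b ∈ normalizer (H : Set G)) (a y : G) :
    (∑ᶠ e : G ⧸ H, if Quotient.out e ∈ dcos H a ∧ (Quotient.out e)⁻¹ * y ∈ dcos H b
      then (1 : R) else 0) = if y ∈ dcos H (a * b) then 1 else 0 := by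
  have hsingle : ∀ e : G ⧸ H, (Quotient.out e)⁻¹ * y ∈ dcos H b ↔ e = (y * b⁻¹ : G) := by
    intro e
    rw [mem_dcos_iff_mul_inv_mem (fun h hh => (mem_normalizer_iff.1 hb h).1 hh), mul_assoc,
      ← QuotientGroup.eq, QuotientGroup.out_eq']
  simp_rw [hsingle]
  rw [finsum_eq_single _ ((y * b⁻¹ : G) : G ⧸ H) (fun e he => if_neg (fun h => he h.2))]
  simp only [and_true, out_mk_mem_dcos_iff, mul_inv_mem_dcos_iff_of_mem_normalizer hb]

variable (H) in
def convolutionSupport (c t x : G) : Set (G ⧸ H) :=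
  {d | Quotient.out d ∈ dcos H c ∧ (Quotient.out d)⁻¹ * x ∈ dcos H t}

theorem finsum_convolution_eq_ncard {R : Type*} [NonAssocSemiring R] (hH : IsHeckePair H)
    (c t x : G) :
    (∑ᶠ d : G ⧸ H, (if Quotient.out d ∈ dcos H c then (1 : R) else 0) *
      (if (Quotient.out d)⁻¹ * x ∈ dcos H t then 1 else 0)) =
      (convolutionSupport H c t x).ncard := by
  have hfin : (convolutionSupport H c t x).Finite :=
    (hH c).subset fun d hd => ⟨_, hd.1, QuotientGroup.out_eq' d⟩
  simp_rw [ite_zero_mul_ite_zero, mul_one]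
  rw [← finsum_one, Nat.cast_finsum_mem hfin, Nat.cast_one, finsum_mem_def]
  exact finsum_congr fun d => by simp only [Set.indicator_apply]; congr

section
variable (hc : ∀ h ∈ H, c * h * c⁻¹ ∈ H) (ht : ∀ h ∈ H, t⁻¹ * h * t ∈ H)
include hc

lemma mem_dcos_mul_of_mem_convolutionSupport {d : G ⧸ H}
    (hd : d ∈ convolutionSupport H c t x) : x ∈ dcos H (c * t) := by
  obtain ⟨h₁, hh₁, h₂, hh₂, hd₁⟩ := mem_dcos_iff_exists.1 hd.1
  obtain ⟨h₃, hh₃, h₄, hh₄, hd₂⟩ := mem_dcos_iff_exists.1 hd.2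
  refine mem_dcos_iff_exists.2
    ⟨h₁ * (c * (h₂ * h₃) * c⁻¹), H.mul_mem hh₁ (hc _ (H.mul_mem hh₂ hh₃)), h₄, hh₄, ?_⟩
  rw [inv_mul_eq_iff_eq_mul.1 hd₂, hd₁]
  group

include ht

lemma convolutionSupport_eq_orbit {h₀ h₁ : G} (hh₀ : h₀ ∈ H) (hh₁ : h₁ ∈ H) :
    convolutionSupport H c t (h₀ * (c * t) * h₁) =
      orbit (H ⊓ toConjAct (h₀ * (c * t)) • H : Subgroup G) ((h₀ * c : G) : G ⧸ H) := by
  ext d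
  constructor
  · rintro ⟨hd₁, hd₂⟩
    rw [mem_dcos_iff_mul_inv_mem hc] at hd₁
    rw [mem_dcos_iff_inv_mul_mem ht] at hd₂
    refine ⟨⟨Quotient.out d * (h₀ * c)⁻¹, mem_inf.2 ⟨?_, ?_⟩⟩, ?_⟩
    · rw [mul_inv_rev, ← mul_assoc]
      exact H.mul_mem hd₁ (H.inv_mem hh₀)
    · rw [mem_conjAct_smul_iff]
      convert H.inv_mem (H.mul_mem hd₂ (H.inv_mem hh₁)) using 1
      group
    · change ((Quotient.out d * (h₀ * c)⁻¹ * (h₀ * c) : G) : G ⧸ H) = d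
      rw [inv_mul_cancel_right, QuotientGroup.out_eq']
  · rintro ⟨⟨k, hk⟩, rfl⟩
    obtain ⟨hkH, hkq⟩ := mem_inf.1 hk
    rw [mem_conjAct_smul_iff] at hkq
    change ((k * (h₀ * c) : G) : G ⧸ H) ∈ convolutionSupport H c t _
    obtain ⟨h, hh⟩ := QuotientGroup.mk_out_eq_mul H (k * (h₀ * c))
    refine ⟨?_, ?_⟩
    · rw [out_mk_mem_dcos_iff]
      exact mem_dcos_iff_exists.2 ⟨k * h₀, H.mul_mem hkH hh₀, 1, H.one_mem, by group⟩
    · rw [hh]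
      refine mem_dcos_iff_exists.2 ⟨(h : G)⁻¹, H.inv_mem h.2, _, H.mul_mem (H.inv_mem hkq) hh₁, ?_⟩
      group

lemma ncard_convolutionSupport_mul_Rcount (hx : x ∈ dcos H (c * t)) :
    (convolutionSupport H c t x).ncard * Rcount H (c * t) = Rcount H t := by
  obtain ⟨h₀, hh₀, h₁, hh₁, rfl⟩ := mem_dcos_iff_exists.1 hx
  have hq : (h₀ * (c * t))⁻¹ * (h₀ * c) = t⁻¹ := by group
  have hle : toConjAct t⁻¹ • H ≤ toConjAct (h₀ * (c * t))⁻¹ • H ⊓ H := by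
    intro y hy
    rw [mem_conjAct_smul_iff, inv_inv] at hy
    refine mem_inf.2 ⟨?_, by simpa [mul_assoc] using ht _ hy⟩
    rw [mem_conjAct_smul_iff, inv_inv]
    convert H.mul_mem (H.mul_mem hh₀ (hc _ hy)) (H.inv_mem hh₀) using 1
    group
  rw [convolutionSupport_eq_orbit hc ht hh₀ hh₁, ncard_orbit_mk,
    ← Rcount_mul_of_mem_normalizer (le_normalizer hh₀), Rcount_eq_relIndex, Rcount_eq_relIndex,
    ← relIndex_pointwise_smul (toConjAct (h₀ * (c * t))⁻¹), smul_inf, ← mul_smul,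
    ← toConjAct_mul, hq, ← mul_smul, ← toConjAct_mul, inv_mul_cancel, toConjAct_one, one_smul,
    ← inf_relIndex_right (toConjAct (h₀ * (c * t))⁻¹ • H)]
  exact relIndex_mul_relIndex _ _ _ hle inf_le_right

end

end

theorem stmt15_general
    (N H : Subgroup G) (hNnormal : N.Normal)
    (S : Subsemigroup G)
    (hHnormN : ∀ n ∈ N, ∀ h ∈ H, n * h * n⁻¹ ∈ H)
    (hsH : ∀ s ∈ S, (fun h => s * h) '' (H : Set G) = dcos H s)
    (hHecke : IsHeckePair H)
    (s t : G) (hsS : s ∈ S) (htS : t ∈ S) (n : G) (hn : n ∈ N) :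
    ∀ x : G,
      (∑ᶠ d : G ⧸ H,
          (∑ᶠ e : G ⧸ H,
              if Quotient.out e ∈ dcos H s⁻¹ ∧
                  (Quotient.out e)⁻¹ * Quotient.out d ∈ dcos H n then (1 : ℂ) else 0) *
            (if (Quotient.out d)⁻¹ * x ∈ dcos H t then (1 : ℂ) else 0))
        = ((Rcount H t : ℂ) / (Rcount H (s⁻¹ * t) : ℂ)) *
            (if x ∈ dcos H (s⁻¹ * n * t) then 1 else 0) := by
  intro x
  have hN : N ≤ Subgroup.normalizer (H : Set G) := Subgroup.le_normalizer_iff.2 hHnormN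
  have hs : ∀ h ∈ H, s⁻¹ * h * s ∈ H := fun h => inv_mul_mul_mem_of_image_mul_eq_dcos (hsH s hsS)
  have ht : ∀ h ∈ H, t⁻¹ * h * t ∈ H := fun h => inv_mul_mul_mem_of_image_mul_eq_dcos (hsH t htS)
  have hc : ∀ h ∈ H, s⁻¹ * n * h * (s⁻¹ * n)⁻¹ ∈ H := fun h hh => by
    convert hs _ (hHnormN n hn h hh) using 1
    group
  have hR : Rcount H (s⁻¹ * n * t) = Rcount H (s⁻¹ * t) := by
    have hm : s⁻¹ * n * s ∈ N := by simpa using hNnormal.conj_mem n hn s⁻¹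
    rw [← Rcount_mul_of_mem_normalizer (hN hm) (s⁻¹ * t)]
    group
  simp_rw [finsum_convolution_eq_of_mem_normalizer (hN hn), finsum_convolution_eq_ncard hHecke]
  split_ifs with hx
  · have hcount := ncard_convolutionSupport_mul_Rcount hc ht hx
    rw [hR] at hcount
    rw [mul_one, eq_div_iff (by exact_mod_cast Rcount_ne_zero hHecke _)]
    exact_mod_cast hcount
  · have hempty : convolutionSupport H (s⁻¹ * n) t x = ∅ :=
      Set.eq_empty_of_forall_notMem fun d hd => hx (mem_dcos_mul_of_mem_convolutionSupport hc hd)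
    rw [hempty, Set.ncard_empty, Nat.cast_zero, mul_zero]

/-- In the Laca–Larsen setting, for `s, t ∈ S` and `n ∈ N` the Hecke algebra satisfies
`[Hs⁻¹H]⋅[HnH]⋅[HtH] = (R(t)/R(s⁻¹t))⋅[Hs⁻¹ntH]`, expressed pointwise via the
(iterated) convolution formula. -/
theorem stmt15
    (N Q H : Subgroup G) (hNnormal : N.Normal)
    (hsd1 : N ⊓ Q = ⊥) (hsd2 : N ⊔ Q = ⊤)
    (S : Subsemigroup G) (hSQ : (S : Set G) ⊆ (Q : Set G))
    (hOre : ∀ s t : S, ∃ u v : S, (u : G) * s = (v : G) * t)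
    (hQS : ∀ q ∈ Q, ∃ s ∈ S, ∃ t ∈ S, q = s⁻¹ * t)
    (hHN : H ≤ N) (hHnormN : ∀ n ∈ N, ∀ h ∈ H, n * h * n⁻¹ ∈ H)
    (hsH : ∀ s ∈ S, (fun h => s * h) '' (H : Set G) = dcos H s)
    (hHecke : IsHeckePair H)
    (s t : G) (hsS : s ∈ S) (htS : t ∈ S) (n : G) (hn : n ∈ N) :
    ∀ x : G,
      (∑ᶠ d : G ⧸ H,
          (∑ᶠ e : G ⧸ H,
              if Quotient.out e ∈ dcos H s⁻¹ ∧
                  (Quotient.out e)⁻¹ * Quotient.out d ∈ dcos H n then (1 : ℂ) else 0) *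
            (if (Quotient.out d)⁻¹ * x ∈ dcos H t then (1 : ℂ) else 0))
        = ((Rcount H t : ℂ) / (Rcount H (s⁻¹ * t) : ℂ)) *
            (if x ∈ dcos H (s⁻¹ * n * t) then 1 else 0) :=
  stmt15_general N H hNnormal S hHnormN hsH hHecke s t hsS htS n hn
end

section
/- In the setting $G = N \rtimes Q$, $Q = S^{-1}S$, $H \trianglelefteq N$ with $sH = HsH$: if $t \in S$ and $n \in N$ with $nH \subseteq tHt^{-1}H$, then in the Hecke algebra $[HnH]\cdot[HtH] = [HtH]$ and $[Ht^{-1}H]\cdot[HnH] = [Ht^{-1}H]$. -/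
open scoped Classical Pointwise

variable {G : Type*} [Group G]

/-!
Since `tH = HtH` and `n` normalises `H`, the double cosets involved are single cosets:
`HtH = tH`, `Ht⁻¹H = Ht⁻¹` and `HnH = nH`. Hence each convolution sum has exactly one nonzero
term, from the coset `nH` in the first product and from `xn⁻¹H` in the second. The hypothesis
`n ∈ tHt⁻¹H` gives `t⁻¹nt ∈ H`, which is what moves that term back to `x` itself.
-/

section DoubleCoset

variable {H : Subgroup G} {a g h t : G}

theorem mul_mem_dcos_iff_of_mem_left (hh : h ∈ H) : h * g ∈ dcos H a ↔ g ∈ dcos H a := by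
  simp only [dcos, DoubleCoset.mem_doubleCoset]
  constructor
  · rintro ⟨x, hx, y, hy, hxy⟩
    refine ⟨h⁻¹ * x, H.mul_mem (H.inv_mem hh) hx, y, hy, ?_⟩
    simp only [mul_assoc] at hxy ⊢
    rw [← hxy, inv_mul_cancel_left]
  · rintro ⟨x, hx, y, hy, rfl⟩
    exact ⟨h * x, H.mul_mem hh hx, y, hy, by group⟩

theorem mul_mem_dcos_iff_of_mem_right (hh : h ∈ H) : g * h ∈ dcos H a ↔ g ∈ dcos H a := by
  simp only [dcos, DoubleCoset.mem_doubleCoset]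
  constructor
  · rintro ⟨x, hx, y, hy, hxy⟩
    exact ⟨x, hx, y * h⁻¹, H.mul_mem hy (H.inv_mem hh), by rw [← mul_assoc, ← hxy]; group⟩
  · rintro ⟨x, hx, y, hy, rfl⟩
    exact ⟨x, hx, y * h, H.mul_mem hy hh, by group⟩

theorem mem_dcos_iff_of_mem_normalizer (ha : a ∈ Subgroup.normalizer (H : Set G)) :
    g ∈ dcos H a ↔ a⁻¹ * g ∈ H := by
  simp only [dcos, DoubleCoset.mem_doubleCoset]
  constructor
  · rintro ⟨x, hx, y, hy, rfl⟩
    have hx' : a⁻¹ * x * a ∈ H := (Subgroup.mem_normalizer_iff''.mp ha x).mp hx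
    simpa only [mul_assoc, inv_mul_cancel_left] using H.mul_mem hx' hy
  · exact fun hg => ⟨1, H.one_mem, a⁻¹ * g, hg, by group⟩

theorem mem_dcos_iff_of_image_eq (ht : (fun h => t * h) '' (H : Set G) = dcos H t) :
    g ∈ dcos H t ↔ t⁻¹ * g ∈ H := by
  rw [← ht]
  constructor
  · rintro ⟨h, hh, rfl⟩
    simpa only [inv_mul_cancel_left, SetLike.mem_coe] using hh
  · exact fun hg => ⟨t⁻¹ * g, hg, mul_inv_cancel_left t g⟩

theorem inv_mul_mul_mem_of_image_eq (ht : (fun h => t * h) '' (H : Set G) = dcos H t)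
    (hh : h ∈ H) : t⁻¹ * h * t ∈ H := by
  rw [mul_assoc, ← mem_dcos_iff_of_image_eq ht, mul_mem_dcos_iff_of_mem_left hh]
  exact DoubleCoset.mem_doubleCoset_self H H t

theorem mem_dcos_inv_iff_of_image_eq (ht : (fun h => t * h) '' (H : Set G) = dcos H t) :
    g ∈ dcos H t⁻¹ ↔ g * t ∈ H := by
  constructor
  · intro hg
    obtain ⟨x, hx, y, hy, rfl⟩ := DoubleCoset.mem_doubleCoset.mp hg
    have hy' := inv_mul_mul_mem_of_image_eq ht hy
    simpa only [mul_assoc, mul_inv_cancel_left] using H.mul_mem hx hy'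
  · exact fun hg => DoubleCoset.mem_doubleCoset.mpr ⟨g * t, hg, 1, H.one_mem, by group⟩

end DoubleCoset

theorem mem_normalizer_of_forall_conj_mem {H N : Subgroup G}
    (hN : ∀ n ∈ N, ∀ h ∈ H, n * h * n⁻¹ ∈ H) {n : G} (hn : n ∈ N) :
    n ∈ Subgroup.normalizer (H : Set G) := by
  refine Subgroup.mem_normalizer_iff.mpr fun h => ⟨hN n hn h, fun hh => ?_⟩
  convert hN n⁻¹ (N.inv_mem hn) _ hh using 1
  group

theorem finsum_ite_out_mem_leftCoset {M : Type*} [AddCommMonoid M] (H : Subgroup G) (a : G)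
    {q p : G → Prop} (hq : ∀ g, q g ↔ a⁻¹ * g ∈ H) (hp : ∀ g, ∀ h ∈ H, p (g * h) ↔ p g)
    (c : M) :
    ∑ᶠ d : G ⧸ H, (if q (Quotient.out d) ∧ p (Quotient.out d) then c else 0) =
      if p a then c else 0 := by
  rw [finsum_eq_single _ (a : G ⧸ H)]
  · have hout : a⁻¹ * Quotient.out (a : G ⧸ H) ∈ H :=
      QuotientGroup.eq.mp (Quotient.out_eq' (a : G ⧸ H)).symm
    have hpa := hp a _ hout
    rw [mul_inv_cancel_left] at hpa
    simp only [hq, hout, hpa, true_and]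
  · intro d hd
    rw [if_neg]
    rintro ⟨hqd, -⟩
    exact hd (((QuotientGroup.eq.mpr ((hq _).mp hqd)).trans (Quotient.out_eq' d)).symm)

theorem stmt16_general
    (N H : Subgroup G)
    (S : Subsemigroup G)
    (hHnormN : ∀ n ∈ N, ∀ h ∈ H, n * h * n⁻¹ ∈ H)
    (hsH : ∀ s ∈ S, (fun h => s * h) '' (H : Set G) = dcos H s)
    (t : G) (htS : t ∈ S) (n : G) (hn : n ∈ N)
    (hnt : n ∈ {g : G | ∃ h ∈ H, ∃ k ∈ H, g = t * h * t⁻¹ * k}) :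
    ∀ x : G,
      ((∑ᶠ d : G ⧸ H,
          if Quotient.out d ∈ dcos H n ∧ (Quotient.out d)⁻¹ * x ∈ dcos H t then
            (1 : ℂ) else 0)
        = (if x ∈ dcos H t then 1 else 0)) ∧
      ((∑ᶠ d : G ⧸ H,
          if Quotient.out d ∈ dcos H t⁻¹ ∧ (Quotient.out d)⁻¹ * x ∈ dcos H n then
            (1 : ℂ) else 0)
        = (if x ∈ dcos H t⁻¹ then 1 else 0)) := by
  intro x
  have ht := hsH t htS
  have hnH := mem_normalizer_of_forall_conj_mem hHnormN hn
  have hntH : t⁻¹ * n * t ∈ H := by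
    obtain ⟨h, hh, k, hk, rfl⟩ := hnt
    have hk' := inv_mul_mul_mem_of_image_eq ht hk
    simpa only [mul_assoc, inv_mul_cancel_left, mul_inv_cancel_left] using H.mul_mem hh hk'
  constructor
  · rw [finsum_ite_out_mem_leftCoset H n (p := fun g => g⁻¹ * x ∈ dcos H t)
      (fun g => mem_dcos_iff_of_mem_normalizer hnH)
      (fun g h hh => by rw [mul_inv_rev, mul_assoc, mul_mem_dcos_iff_of_mem_left (H.inv_mem hh)])]
    have hconj : t⁻¹ * (n⁻¹ * x) = (t⁻¹ * n * t)⁻¹ * (t⁻¹ * x) := by group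
    simp only [mem_dcos_iff_of_image_eq ht, hconj, H.mul_mem_cancel_left (H.inv_mem hntH)]
  · have hq : ∀ g : G, g⁻¹ * x ∈ dcos H n ↔ (x * n⁻¹)⁻¹ * g ∈ H := fun g => by
      rw [mem_dcos_iff_of_mem_normalizer hnH, ← H.inv_mem_iff,
        Subgroup.mem_normalizer_iff.mp hnH]
      group
    simp_rw [and_comm (a := Quotient.out _ ∈ dcos H t⁻¹)]
    rw [finsum_ite_out_mem_leftCoset H (x * n⁻¹) hq
      (fun g h hh => mul_mem_dcos_iff_of_mem_right hh)]
    have hconj : x * n⁻¹ * t = x * t * (t⁻¹ * n * t)⁻¹ := by group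
    simp only [mem_dcos_inv_iff_of_image_eq ht, hconj, H.mul_mem_cancel_right (H.inv_mem hntH)]

/-- In the Laca–Larsen setting, if `t ∈ S` and `n ∈ N` with `nH ⊆ tHt⁻¹H`, then
`[HnH]⋅[HtH] = [HtH]` and `[Ht⁻¹H]⋅[HnH] = [Ht⁻¹H]` in the Hecke algebra, expressed
pointwise via the convolution formula. -/
theorem stmt16
    (N Q H : Subgroup G) (hNnormal : N.Normal)
    (hsd1 : N ⊓ Q = ⊥) (hsd2 : N ⊔ Q = ⊤)
    (S : Subsemigroup G) (hSQ : (S : Set G) ⊆ (Q : Set G))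
    (hOre : ∀ s t : S, ∃ u v : S, (u : G) * s = (v : G) * t)
    (hQS : ∀ q ∈ Q, ∃ s ∈ S, ∃ t ∈ S, q = s⁻¹ * t)
    (hHN : H ≤ N) (hHnormN : ∀ n ∈ N, ∀ h ∈ H, n * h * n⁻¹ ∈ H)
    (hsH : ∀ s ∈ S, (fun h => s * h) '' (H : Set G) = dcos H s)
    (hHecke : IsHeckePair H)
    (t : G) (htS : t ∈ S) (n : G) (hn : n ∈ N)
    (hnt : n ∈ {g : G | ∃ h ∈ H, ∃ k ∈ H, g = t * h * t⁻¹ * k}) :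
    ∀ x : G,
      ((∑ᶠ d : G ⧸ H,
          if Quotient.out d ∈ dcos H n ∧ (Quotient.out d)⁻¹ * x ∈ dcos H t then
            (1 : ℂ) else 0)
        = (if x ∈ dcos H t then 1 else 0)) ∧
      ((∑ᶠ d : G ⧸ H,
          if Quotient.out d ∈ dcos H t⁻¹ ∧ (Quotient.out d)⁻¹ * x ∈ dcos H n then
            (1 : ℂ) else 0)
        = (if x ∈ dcos H t⁻¹ then 1 else 0)) :=
  stmt16_general N H S hHnormN hsH t htS n hn hnt
end

section
/- In the setting $G = N \rtimes Q$, $Q = S^{-1}S$, $H \trianglelefteq N$: the right-coset counting map satisfies $R(s)R(t) = R(ts)$ for all $s, t \in S$. -/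
open scoped Classical Pointwise

variable {G : Type*} [Group G]

/-!
Write `H.comap (MulAut.conj s)` for `s⁻¹Hs`. If `sH = HsH`, then `Hs ⊆ sH`, so `s⁻¹Hs ≤ H`, and
the right cosets of `H` in `HsH = sH` are the `H(sh)` with `h ∈ H`, where `H(sh₁) = H(sh₂)` iff
`h₂h₁⁻¹ ∈ s⁻¹Hs`. Hence `R(s) = [H : s⁻¹Hs]`. Since `(ts)⁻¹H(ts) = s⁻¹(t⁻¹Ht)s` and conjugation
by `s` preserves relative indices, `[s⁻¹Hs : (ts)⁻¹H(ts)] = [H : t⁻¹Ht] = R(t)`, and the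
tower `(ts)⁻¹H(ts) ≤ s⁻¹Hs ≤ H` gives `R(ts) = R(s) R(t)`.
-/

namespace Subgroup

lemma comap_conj_mul (H : Subgroup G) (s t : G) :
    H.comap (MulAut.conj (t * s)).toMonoidHom =
      (H.comap (MulAut.conj t).toMonoidHom).comap (MulAut.conj s).toMonoidHom := by
  ext x
  simp [MulAut.conj_apply, mul_assoc]

lemma relIndex_comap_conj_mul (H : Subgroup G) (s t : G) :
    (H.comap (MulAut.conj (t * s)).toMonoidHom).relIndex (H.comap (MulAut.conj s).toMonoidHom) =
      (H.comap (MulAut.conj t).toMonoidHom).relIndex H := by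
  rw [comap_conj_mul, relIndex_comap, map_comap_eq_self_of_surjective (MulAut.conj s).surjective]

end Subgroup

lemma ker_mk_mul_eq_rightRel (H : Subgroup G) (s : G) :
    Setoid.ker (fun h : H => Quotient.mk (QuotientGroup.rightRel H) (s * h)) =
      QuotientGroup.rightRel ((H.comap (MulAut.conj s).toMonoidHom).subgroupOf H) := by
  ext h₁ h₂
  rw [Setoid.ker_def, Quotient.eq, QuotientGroup.rightRel_apply, QuotientGroup.rightRel_apply]
  simp [Subgroup.mem_subgroupOf, MulAut.conj_apply, mul_assoc]

section

variable {H : Subgroup G} {s : G}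

lemma comap_conj_le_of_image_eq_dcos (hs : (fun h => s * h) '' (H : Set G) = dcos H s) :
    H.comap (MulAut.conj s).toMonoidHom ≤ H := by
  intro x hx
  have hmem : s * x ∈ dcos H s :=
    DoubleCoset.mem_doubleCoset.mpr ⟨_, hx, 1, H.one_mem, by simp [MulAut.conj_apply]⟩
  rw [← hs] at hmem
  obtain ⟨h, hh, hsh⟩ := hmem
  exact mul_left_cancel hsh ▸ hh

lemma rightCosetsIn_eq_range (hs : (fun h => s * h) '' (H : Set G) = dcos H s) :
    rightCosetsIn H s = Set.range fun h : H => Quotient.mk (QuotientGroup.rightRel H) (s * h) := by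
  rw [rightCosetsIn, ← hs, Set.image_image, Set.image_eq_range]
  rfl

lemma Rcount_eq_relIndex_s17 (hs : (fun h => s * h) '' (H : Set G) = dcos H s) :
    Rcount H s = (H.comap (MulAut.conj s).toMonoidHom).relIndex H := by
  rw [Rcount, rightCosetsIn_eq_range hs, ← Nat.card_congr (Setoid.quotientKerEquivRange _),
    ker_mk_mul_eq_rightRel, Nat.card_congr (QuotientGroup.quotientRightRelEquivQuotientLeftRel _)]
  rfl

theorem Rcount_mul_Rcount {t : G} (hs : (fun h => s * h) '' (H : Set G) = dcos H s)
    (ht : (fun h => t * h) '' (H : Set G) = dcos H t)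
    (hts : (fun h => t * s * h) '' (H : Set G) = dcos H (t * s)) :
    Rcount H s * Rcount H t = Rcount H (t * s) := by
  have hle : H.comap (MulAut.conj (t * s)).toMonoidHom ≤ H.comap (MulAut.conj s).toMonoidHom := by
    rw [Subgroup.comap_conj_mul]
    exact Subgroup.comap_mono (comap_conj_le_of_image_eq_dcos ht)
  rw [Rcount_eq_relIndex_s17 hs, Rcount_eq_relIndex_s17 ht, Rcount_eq_relIndex_s17 hts,
    ← Subgroup.relIndex_comap_conj_mul H s t, mul_comm]
  exact Subgroup.relIndex_mul_relIndex _ _ _ hle (comap_conj_le_of_image_eq_dcos hs)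

end

theorem stmt17_general
    (H : Subgroup G)
    (S : Subsemigroup G)
    (hsH : ∀ s ∈ S, (fun h => s * h) '' (H : Set G) = dcos H s)
    (s t : G) (hsS : s ∈ S) (htS : t ∈ S) :
    Rcount H s * Rcount H t = Rcount H (t * s) :=
  Rcount_mul_Rcount (hsH s hsS) (hsH t htS) (hsH _ (S.mul_mem htS hsS))

/-- In the Laca–Larsen setting, the right-coset counting map satisfies
`R(s)R(t) = R(ts)` for all `s, t ∈ S`. -/
theorem stmt17
    (N Q H : Subgroup G) (hNnormal : N.Normal)
    (hsd1 : N ⊓ Q = ⊥) (hsd2 : N ⊔ Q = ⊤)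
    (S : Subsemigroup G) (hSQ : (S : Set G) ⊆ (Q : Set G))
    (hOre : ∀ s t : S, ∃ u v : S, (u : G) * s = (v : G) * t)
    (hQS : ∀ q ∈ Q, ∃ s ∈ S, ∃ t ∈ S, q = s⁻¹ * t)
    (hHN : H ≤ N) (hHnormN : ∀ n ∈ N, ∀ h ∈ H, n * h * n⁻¹ ∈ H)
    (hsH : ∀ s ∈ S, (fun h => s * h) '' (H : Set G) = dcos H s)
    (hHecke : IsHeckePair H)
    (s t : G) (hsS : s ∈ S) (htS : t ∈ S) :
    Rcount H s * Rcount H t = Rcount H (t * s) :=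
  stmt17_general H S hsH s t hsS htS
end
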